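/- In a weakly communicating finite MDP, for every discount factor γ ∈ [0,1), letting π*_γ denote an optimal policy for the γ-discounted MDP and ρ* the (constant) optimal gain, one has sup_s |V_γ^{π*_γ}(s) − ρ*/(1−γ)| ≤ sp(h*). -/

import Mathlib

open Filter Matrix MeasureTheory
open scoped BigOperators ENNReal

namespace PaperMDP

variable {S A : Type*}

section Core

variable [Fintype S] [Fintype A] [DecidableEq S] [Nonempty S] [Nonempty A]

/-- `p` is a transition probability kernel on `S × A`. -/
def IsKernel (p : S → A → S → ℝ) : Prop :=
  ∀ s a, (∀ s', 0 ≤ p s a s') ∧ (∑ s', p s a s') = 1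

/-- `pol` is a stationary Markov (randomized) policy. -/
def IsPolicy (pol : S → A → ℝ) : Prop :=
  ∀ s, (∀ a, 0 ≤ pol s a) ∧ (∑ a, pol s a) = 1

/-- Transition matrix `P_π` induced by a policy. -/
def polMat (p : S → A → S → ℝ) (pol : S → A → ℝ) : Matrix S S ℝ :=
  Matrix.of fun s s' => ∑ a, pol s a * p s a s'

/-- Reward vector `r_π` induced by a policy. -/
def polRew (r : S → A → ℝ) (pol : S → A → ℝ) : S → ℝ := fun s => ∑ a, pol s a * r s a

/-- The deterministic policy induced by `d : S → A`, viewed as a randomized policy. -/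
def detPol [DecidableEq A] (d : S → A) : S → A → ℝ := fun s a => if a = d s then 1 else 0

/-- `(I - γ M)⁻¹ v = ∑_{t ≥ 0} γ^t M^t v` (Neumann series). -/
noncomputable def resApply (γ : ℝ) (M : Matrix S S ℝ) (v : S → ℝ) : S → ℝ :=
  ∑' t : ℕ, γ ^ t • (M ^ t *ᵥ v)

/-- Discounted value function `V_γ^π`. -/
noncomputable def dval (p : S → A → S → ℝ) (r : S → A → ℝ) (γ : ℝ) (pol : S → A → ℝ) :
    S → ℝ :=
  resApply γ (polMat p pol) (polRew r pol)

/-- Optimal discounted value function `V_γ^*`. -/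
noncomputable def dvalStar (p : S → A → S → ℝ) (r : S → A → ℝ) (γ : ℝ) : S → ℝ := fun s =>
  ⨆ q : {q : S → A → ℝ // IsPolicy q}, dval p r γ q.1 s

/-- `pol` is an optimal policy for the `γ`-discounted MDP `(p, r, γ)`. -/
def DiscountedOptimal (p : S → A → S → ℝ) (r : S → A → ℝ) (γ : ℝ) (pol : S → A → ℝ) :
    Prop :=
  IsPolicy pol ∧ ∀ q : S → A → ℝ, IsPolicy q → ∀ s, dval p r γ q s ≤ dval p r γ pol s

/-- Cesàro limit of a sequence of vectors. -/
noncomputable def cesaro (f : ℕ → S → ℝ) : S → ℝ :=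
  limUnder atTop fun N : ℕ => (N : ℝ)⁻¹ • ∑ T ∈ Finset.range N, f T

/-- The gain (long-run average reward) `ρ^π`. -/
noncomputable def gain (p : S → A → S → ℝ) (r : S → A → ℝ) (pol : S → A → ℝ) : S → ℝ :=
  cesaro fun t => (polMat p pol ^ t) *ᵥ polRew r pol

/-- The bias function `h^π`. -/
noncomputable def bias (p : S → A → S → ℝ) (r : S → A → ℝ) (pol : S → A → ℝ) : S → ℝ :=
  cesaro fun T => ∑ t ∈ Finset.range T, ((polMat p pol ^ t) *ᵥ polRew r pol - gain p r pol)

/-- Blackwell optimality of a policy. -/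
def Blackwell (p : S → A → S → ℝ) (r : S → A → ℝ) (pol : S → A → ℝ) : Prop :=
  IsPolicy pol ∧ ∃ γ₀ ∈ Set.Ioo (0 : ℝ) 1, ∀ γ ∈ Set.Ico γ₀ 1,
    ∀ q : S → A → ℝ, IsPolicy q → ∀ s, dval p r γ q s ≤ dval p r γ pol s

/-- The optimal gain `ρ^*(s) = sup_π ρ^π(s)`. -/
noncomputable def gainStar (p : S → A → S → ℝ) (r : S → A → ℝ) : S → ℝ := fun s =>
  ⨆ q : {q : S → A → ℝ // IsPolicy q}, gain p r q.1 s

/-- Span seminorm `sp(v) = max v - min v`. -/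
noncomputable def span (v : S → ℝ) : ℝ := (⨆ s, v s) - (⨅ s, v s)

/-- `s'` is reachable from `s` in the Markov chain with transition matrix `M`. -/
def Reaches (M : Matrix S S ℝ) (s s' : S) : Prop := ∃ t : ℕ, 0 < (M ^ t) s s'

/-- A state of a finite Markov chain is recurrent iff its communicating class is closed. -/
def Recurrent (M : Matrix S S ℝ) (s : S) : Prop := ∀ s', Reaches M s s' → Reaches M s' s

/-- Weakly communicating MDP. -/
def WeaklyCommunicating (p : S → A → S → ℝ) : Prop :=
  ∃ S1 : Set S,
    (∀ s ∈ S1, ∀ pol : S → A → ℝ, IsPolicy pol → ¬Recurrent (polMat p pol) s) ∧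
    ∀ s ∉ S1, ∀ s' ∉ S1, ∃ pol : S → A → ℝ, IsPolicy pol ∧ Reaches (polMat p pol) s s'

/-- The probability that the chain `M` started at `s` is in a transient state at time `t`.
For a finite chain, `E_s[T_{R}] = ∑_{t} transientMass M s t`, since the set of recurrent
states is closed. -/
noncomputable def transientMass (M : Matrix S S ℝ) (s : S) (t : ℕ) : ℝ :=
  ∑ s', Set.indicator {x : S | ¬Recurrent M x} (fun x => (M ^ t) s x) s'

/-- The bounded transient time property with parameter `B`:
`E_s^π[T_{R^π}] ≤ B` for every deterministic stationary policy and every state. -/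
def BoundedTransientTime [DecidableEq A] (p : S → A → S → ℝ) (B : ℝ) : Prop :=
  ∀ (d : S → A) (s : S) (n : ℕ),
    (∑ t ∈ Finset.range n, transientMass (polMat p (detPol d)) s t) ≤ B

/-- One-step variance vector `𝕍_{P}[V]`. -/
noncomputable def oneStepVar (M : Matrix S S ℝ) (V : S → ℝ) : S → ℝ := fun s =>
  ∑ s', M s s' * (V s' - (M *ᵥ V) s) ^ 2

/-- Probability of the path `(S_0, …, S_T) = path` for the chain `M` started at `s`. -/
noncomputable def pathProb (M : Matrix S S ℝ) (s : S) {T : ℕ} (path : Fin (T + 1) → S) : ℝ :=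
  (if path 0 = s then 1 else 0) * ∏ i : Fin T, M (path i.castSucc) (path i.succ)

/-- Expectation of a function of `(S_0, …, S_T)` for the chain `M` started at `s`. -/
noncomputable def pathExp (M : Matrix S S ℝ) (s : S) (T : ℕ) (f : (Fin (T + 1) → S) → ℝ) :
    ℝ :=
  ∑ path : Fin (T + 1) → S, pathProb M s path * f path

/-- Variance of a function of `(S_0, …, S_T)` for the chain `M` started at `s`. -/
noncomputable def pathVar (M : Matrix S S ℝ) (s : S) (T : ℕ) (f : (Fin (T + 1) → S) → ℝ) :
    ℝ :=
  pathExp M s T fun path => (f path - pathExp M s T f) ^ 2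

/-- Variance of the infinite-horizon discounted return, `𝕍_s^π[∑_{t} γ^t R_t]`,
as the limit of the variances of the truncated returns. -/
noncomputable def returnVar (M : Matrix S S ℝ) (rv : S → ℝ) (γ : ℝ) : S → ℝ := fun s =>
  limUnder atTop fun T : ℕ =>
    pathVar M s T fun path => ∑ t : Fin (T + 1), γ ^ (t : ℕ) * rv (path t)

end Core

open Topology

set_option linter.unusedSectionVars false
set_option linter.unusedVariables false
set_option maxHeartbeats 1000000

section AuxBasic

variable [Fintype S] [DecidableEq S] [Nonempty S]


/-- Row-stochastic matrix. -/
def RowStoch (M : Matrix S S ℝ) : Prop :=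
  (∀ i j, 0 ≤ M i j) ∧ ∀ i, (∑ j, M i j) = 1

lemma RowStoch.one : RowStoch (1 : Matrix S S ℝ) := by
  constructor
  · intro i j
    by_cases h : i = j <;> simp [Matrix.one_apply, h]
  · intro i
    simp [Matrix.one_apply]

lemma RowStoch.mul {M N : Matrix S S ℝ} (hM : RowStoch M) (hN : RowStoch N) :
    RowStoch (M * N) := by
  constructor
  · intro i j
    exact Finset.sum_nonneg fun k _ => mul_nonneg (hM.1 i k) (hN.1 k j)
  · intro i
    simp only [Matrix.mul_apply]
    rw [Finset.sum_comm]
    calc (∑ k, ∑ j, M i k * N k j) = ∑ k, M i k * ∑ j, N k j := by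
          simp [Finset.mul_sum]
      _ = 1 := by simp [hN.2, hM.2 i]

lemma RowStoch.pow {M : Matrix S S ℝ} (hM : RowStoch M) (n : ℕ) : RowStoch (M ^ n) := by
  induction n with
  | zero => simpa using RowStoch.one
  | succ n ih => rw [pow_succ]; exact ih.mul hM

lemma RowStoch.mulVec_le {M : Matrix S S ℝ} (hM : RowStoch M) {v : S → ℝ} {b : ℝ}
    (hv : ∀ j, v j ≤ b) (i : S) : (M *ᵥ v) i ≤ b := by
  have : (M *ᵥ v) i ≤ ∑ j, M i j * b := by
    apply Finset.sum_le_sum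
    intro j _
    exact mul_le_mul_of_nonneg_left (hv j) (hM.1 i j)
  simpa [← Finset.sum_mul, hM.2 i] using this

lemma RowStoch.le_mulVec {M : Matrix S S ℝ} (hM : RowStoch M) {v : S → ℝ} {a : ℝ}
    (hv : ∀ j, a ≤ v j) (i : S) : a ≤ (M *ᵥ v) i := by
  have : (∑ j, M i j * a) ≤ (M *ᵥ v) i := by
    apply Finset.sum_le_sum
    intro j _
    exact mul_le_mul_of_nonneg_left (hv j) (hM.1 i j)
  simpa [← Finset.sum_mul, hM.2 i] using this

lemma RowStoch.abs_mulVec_le {M : Matrix S S ℝ} (hM : RowStoch M) {v : S → ℝ} {b : ℝ}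
    (hv : ∀ j, |v j| ≤ b) (i : S) : |(M *ᵥ v) i| ≤ b := by
  rw [abs_le]
  exact ⟨hM.le_mulVec (fun j => (abs_le.1 (hv j)).1) i,
    hM.mulVec_le (fun j => (abs_le.1 (hv j)).2) i⟩

lemma RowStoch.mulVec_mono {M : Matrix S S ℝ} (hM : RowStoch M) {v w : S → ℝ}
    (hvw : ∀ j, v j ≤ w j) (i : S) : (M *ᵥ v) i ≤ (M *ᵥ w) i :=
  Finset.sum_le_sum fun j _ => mul_le_mul_of_nonneg_left (hvw j) (hM.1 i j)

lemma RowStoch.mulVec_const {M : Matrix S S ℝ} (hM : RowStoch M) (c : ℝ) :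
    M *ᵥ (fun _ => c) = fun _ => c := by
  funext i
  simp [Matrix.mulVec, dotProduct, ← Finset.sum_mul, hM.2 i]



/-- a crude uniform bound on a vector -/
lemma exists_abs_bound (v : S → ℝ) : ∃ C : ℝ, 0 ≤ C ∧ ∀ j, |v j| ≤ C := by
  refine ⟨∑ j, |v j|, Finset.sum_nonneg fun j _ => abs_nonneg _, fun j => ?_⟩
  exact Finset.single_le_sum (fun i _ => abs_nonneg (v i)) (Finset.mem_univ j)

lemma pow_mulVec_fixed {M : Matrix S S ℝ} {k : S → ℝ} (hk : M *ᵥ k = k) (t : ℕ) :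
    (M ^ t) *ᵥ k = k := by
  induction t with
  | zero => simp
  | succ n ih => rw [pow_succ', ← Matrix.mulVec_mulVec, ih, hk]

lemma telescope_mulVec (M : Matrix S S ℝ) (w : S → ℝ) (N : ℕ) :
    (∑ t ∈ Finset.range N, (M ^ t) *ᵥ (M *ᵥ w - w)) = (M ^ N) *ᵥ w - w := by
  induction N with
  | zero => simp
  | succ n ih =>
      rw [Finset.sum_range_succ, ih, Matrix.mulVec_sub, Matrix.mulVec_mulVec, ← pow_succ]
      abel

lemma sum_pow_mulVec (M : Matrix S S ℝ) {k w v : S → ℝ} (hk : M *ᵥ k = k)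
    (hv : v = k + (M *ᵥ w - w)) (N : ℕ) :
    (∑ t ∈ Finset.range N, (M ^ t) *ᵥ v) = (N : ℝ) • k + ((M ^ N) *ᵥ w - w) := by
  have h1 : ∀ t, (M ^ t) *ᵥ v = k + (M ^ t) *ᵥ (M *ᵥ w - w) := by
    intro t
    rw [hv, Matrix.mulVec_add, pow_mulVec_fixed hk]
  simp only [h1, Finset.sum_add_distrib, telescope_mulVec, Finset.sum_const,
    Finset.card_range]
  rw [Nat.cast_smul_eq_nsmul]

/-- convergence of Cesàro averages given the decomposition -/
lemma cesaro_tendsto_of_decomp {M : Matrix S S ℝ} (hM : RowStoch M) {k w v : S → ℝ}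
    (hk : M *ᵥ k = k) (hv : v = k + (M *ᵥ w - w)) :
    Tendsto (fun N : ℕ => (N : ℝ)⁻¹ • ∑ t ∈ Finset.range N, (M ^ t) *ᵥ v) atTop (𝓝 k) := by
  obtain ⟨C, hC0, hC⟩ := exists_abs_bound w
  rw [tendsto_pi_nhds]
  intro s
  have key : ∀ N : ℕ, 1 ≤ N →
      ‖((N : ℝ)⁻¹ • ∑ t ∈ Finset.range N, (M ^ t) *ᵥ v) s - k s‖ ≤ (2 * C) / N := by
    intro N hN
    have hNpos : (0:ℝ) < N := by exact_mod_cast hN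
    rw [sum_pow_mulVec M hk hv N]
    have heq : (((N:ℝ)⁻¹) • ((N : ℝ) • k + ((M ^ N) *ᵥ w - w))) s - k s
        = (N:ℝ)⁻¹ * (((M ^ N) *ᵥ w) s - w s) := by
      simp only [Pi.smul_apply, Pi.add_apply, Pi.sub_apply, smul_eq_mul]
      field_simp
      ring
    rw [heq, Real.norm_eq_abs, abs_mul, abs_inv, Nat.abs_cast, div_eq_inv_mul]
    apply mul_le_mul_of_nonneg_left _ (by positivity)
    calc |((M ^ N) *ᵥ w) s - w s| ≤ |((M ^ N) *ᵥ w) s| + |w s| := abs_sub _ _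
      _ ≤ C + C := add_le_add ((hM.pow N).abs_mulVec_le hC s) (hC s)
      _ = 2 * C := by ring
  have h2 : Tendsto (fun N : ℕ => (2 * C) / (N:ℝ)) atTop (𝓝 0) :=
    tendsto_const_div_atTop_nhds_zero_nat (2 * C)
  have hsq : Tendsto (fun N : ℕ =>
      ((N : ℝ)⁻¹ • ∑ t ∈ Finset.range N, (M ^ t) *ᵥ v) s - k s) atTop (𝓝 0) :=
    squeeze_zero_norm' (eventually_atTop.2 ⟨1, fun N hN => key N hN⟩) h2
  have h3 := hsq.add_const (k s)
  simpa using h3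

/-- Mean ergodic theorem: decomposition + convergence. -/
theorem existsCesaroDecomp {M : Matrix S S ℝ} (hM : RowStoch M) (v : S → ℝ) :
    ∃ k w : S → ℝ, M *ᵥ k = k ∧ v = k + (M *ᵥ w - w) ∧
      Tendsto (fun N : ℕ => (N : ℝ)⁻¹ • ∑ t ∈ Finset.range N, (M ^ t) *ᵥ v) atTop (𝓝 k) := by
  classical
  set T : (S → ℝ) →ₗ[ℝ] (S → ℝ) := M.mulVecLin - LinearMap.id with hT
  have hTapp : ∀ x, T x = M *ᵥ x - x := fun x => rfl
  have hdisj : LinearMap.ker T ⊓ LinearMap.range T = ⊥ := by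
    rw [Submodule.eq_bot_iff]
    rintro x ⟨hker, w, hw⟩
    have hx : M *ᵥ x = x := by
      have h := (LinearMap.mem_ker.1 hker)
      rw [hTapp] at h
      exact sub_eq_zero.1 h
    rw [hTapp] at hw
    obtain ⟨C, hC0, hC⟩ := exists_abs_bound w
    have key : ∀ N : ℕ, (N:ℝ) • x = (M ^ N) *ᵥ w - w := by
      intro N
      have h1 : (∑ t ∈ Finset.range N, (M ^ t) *ᵥ x) = (N:ℝ) • x := by
        simp only [pow_mulVec_fixed hx, Finset.sum_const, Finset.card_range]
        rw [Nat.cast_smul_eq_nsmul]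
      rw [← h1, ← telescope_mulVec M w N]
      congr 1
      funext t
      rw [hw]
    funext s
    show x s = 0
    by_contra hne
    obtain ⟨N, hN⟩ := exists_nat_gt ((2*C)/|x s|)
    have habs : (0:ℝ) < |x s| := abs_pos.2 hne
    have h2 : (N:ℝ) * |x s| ≤ 2*C := by
      have hcf := congrFun (key N) s
      simp only [Pi.smul_apply, Pi.sub_apply, smul_eq_mul] at hcf
      calc (N:ℝ)*|x s| = |(N:ℝ) * x s| := by rw [abs_mul, Nat.abs_cast]
        _ = |((M^N)*ᵥw) s - w s| := by rw [hcf]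
        _ ≤ |((M^N)*ᵥw) s| + |w s| := abs_sub _ _
        _ ≤ C + C := add_le_add ((hM.pow N).abs_mulVec_le hC s) (hC s)
        _ = 2*C := by ring
    have h3 : (2*C)/|x s| < (N:ℝ) := hN
    have h4 : 2*C < (N:ℝ) * |x s| := (div_lt_iff₀ habs).1 h3
    linarith
  have hsup : LinearMap.ker T ⊔ LinearMap.range T = ⊤ := by
    apply Submodule.eq_top_of_finrank_eq
    have h1 := Submodule.finrank_sup_add_finrank_inf_eq (LinearMap.ker T) (LinearMap.range T)
    rw [hdisj] at h1
    simp only [finrank_bot, add_zero] at h1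
    rw [h1, add_comm]
    exact LinearMap.finrank_range_add_finrank_ker T
  have hv : v ∈ LinearMap.ker T ⊔ LinearMap.range T := hsup ▸ Submodule.mem_top
  obtain ⟨k, hkmem, y, hymem, hky⟩ := Submodule.mem_sup.1 hv
  obtain ⟨w, hw⟩ := hymem
  have hk : M *ᵥ k = k := by
    have := LinearMap.mem_ker.1 hkmem
    rw [hTapp] at this
    exact sub_eq_zero.1 this
  rw [hTapp] at hw
  have hdec : v = k + (M *ᵥ w - w) := by rw [← hky, hw]
  exact ⟨k, w, hk, hdec, cesaro_tendsto_of_decomp hM hk hdec⟩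



section series
variable {Q : Matrix S S ℝ} {γ : ℝ}

lemma summable_geom_mulVec (hQ : RowStoch Q) (h0 : 0 ≤ γ) (h1 : γ < 1) (v : S → ℝ) (s : S) :
    Summable (fun t : ℕ => γ ^ t * ((Q ^ t *ᵥ v) s)) := by
  obtain ⟨C, hC0, hC⟩ := exists_abs_bound v
  apply Summable.of_norm_bounded (g := fun t : ℕ => γ ^ t * C)
  · exact (summable_geometric_of_lt_one h0 h1).mul_right C
  · intro t
    rw [Real.norm_eq_abs, abs_mul, abs_pow, abs_of_nonneg h0]
    exact mul_le_mul_of_nonneg_left ((hQ.pow t).abs_mulVec_le hC s) (pow_nonneg h0 t)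

lemma tsum_geom_const (h0 : 0 ≤ γ) (h1 : γ < 1) (c : ℝ) :
    ∑' t : ℕ, γ ^ t * c = c / (1 - γ) := by
  rw [tsum_mul_right, tsum_geometric_of_lt_one h0 h1]
  rw [div_eq_mul_inv, mul_comm]

lemma tsum_geom_mulVec_const (hQ : RowStoch Q) (h0 : 0 ≤ γ) (h1 : γ < 1) (c : ℝ) (s : S) :
    ∑' t : ℕ, γ ^ t * ((Q ^ t *ᵥ (fun _ => c)) s) = c / (1 - γ) := by
  have : ∀ t : ℕ, (Q ^ t *ᵥ (fun _ => c)) s = c := by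
    intro t
    have h := le_antisymm ((hQ.pow t).mulVec_le (fun j => le_refl c) s)
      ((hQ.pow t).le_mulVec (fun j => le_refl c) s)
    exact h
  simp only [this]
  exact tsum_geom_const h0 h1 c

lemma tsum_geom_mono (hQ : RowStoch Q) (h0 : 0 ≤ γ) (h1 : γ < 1) {v w : S → ℝ}
    (hvw : ∀ j, v j ≤ w j) (s : S) :
    ∑' t : ℕ, γ ^ t * ((Q ^ t *ᵥ v) s) ≤ ∑' t : ℕ, γ ^ t * ((Q ^ t *ᵥ w) s) := by
  apply Summable.tsum_le_tsum _ (summable_geom_mulVec hQ h0 h1 v s) (summable_geom_mulVec hQ h0 h1 w s)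
  intro t
  exact mul_le_mul_of_nonneg_left ((hQ.pow t).mulVec_mono hvw s) (pow_nonneg h0 t)

/-- Key telescoping identity. -/
lemma tsum_geom_sub_mulVec (hQ : RowStoch Q) (h0 : 0 ≤ γ) (h1 : γ < 1) (h : S → ℝ) (s : S) :
    ∑' t : ℕ, γ ^ t * ((Q ^ t *ᵥ (h - Q *ᵥ h)) s)
      = h s - (1 - γ) * ∑' t : ℕ, γ ^ t * ((Q ^ (t + 1) *ᵥ h) s) := by
  have hsA : Summable (fun t : ℕ => γ ^ t * ((Q ^ t *ᵥ h) s)) :=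
    summable_geom_mulVec hQ h0 h1 h s
  have hsB : Summable (fun t : ℕ => γ ^ t * ((Q ^ (t + 1) *ᵥ h) s)) :=
    (summable_geom_mulVec hQ h0 h1 (Q *ᵥ h) s).congr
      (fun t => by rw [Matrix.mulVec_mulVec, ← pow_succ])
  have hterm : ∀ t : ℕ, γ ^ t * ((Q ^ t *ᵥ (h - Q *ᵥ h)) s)
      = γ ^ t * ((Q ^ t *ᵥ h) s) - γ ^ t * ((Q ^ (t + 1) *ᵥ h) s) := by
    intro t
    rw [Matrix.mulVec_sub]
    simp only [Pi.sub_apply]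
    rw [Matrix.mulVec_mulVec, ← pow_succ]
    ring
  calc ∑' t : ℕ, γ ^ t * ((Q ^ t *ᵥ (h - Q *ᵥ h)) s)
      = ∑' t : ℕ, (γ ^ t * ((Q ^ t *ᵥ h) s) - γ ^ t * ((Q ^ (t + 1) *ᵥ h) s)) := by
        congr 1; funext t; exact hterm t
    _ = (∑' t : ℕ, γ ^ t * ((Q ^ t *ᵥ h) s)) - ∑' t : ℕ, γ ^ t * ((Q ^ (t+1) *ᵥ h) s) :=
        Summable.tsum_sub hsA hsB
    _ = h s - (1 - γ) * ∑' t : ℕ, γ ^ t * ((Q ^ (t + 1) *ᵥ h) s) := by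
        have hA : (∑' t : ℕ, γ ^ t * ((Q ^ t *ᵥ h) s))
            = h s + γ * ∑' t : ℕ, γ ^ t * ((Q ^ (t+1) *ᵥ h) s) := by
          rw [Summable.tsum_eq_zero_add hsA]
          congr 1
          · simp
          · rw [← tsum_mul_left]
            congr 1; funext t; ring
        rw [hA]; ring

lemma geom_avg_bounds (hQ : RowStoch Q) (h0 : 0 ≤ γ) (h1 : γ < 1) {h : S → ℝ} {a b : ℝ}
    (hab : ∀ j, a ≤ h j ∧ h j ≤ b) (s : S) :
    a ≤ (1 - γ) * ∑' t : ℕ, γ ^ t * ((Q ^ (t + 1) *ᵥ h) s) ∧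
    (1 - γ) * ∑' t : ℕ, γ ^ t * ((Q ^ (t + 1) *ᵥ h) s) ≤ b := by
  have h1γ : (0:ℝ) < 1 - γ := by linarith
  have hsB : Summable (fun t : ℕ => γ ^ t * ((Q ^ (t + 1) *ᵥ h) s)) :=
    (summable_geom_mulVec hQ h0 h1 (Q *ᵥ h) s).congr
      (fun t => by rw [Matrix.mulVec_mulVec, ← pow_succ])
  have hsg : Summable (fun t : ℕ => γ ^ t) := summable_geometric_of_lt_one h0 h1
  constructor
  · have hdiv : ∑' t : ℕ, γ ^ t * a ≤ ∑' t : ℕ, γ ^ t * ((Q ^ (t + 1) *ᵥ h) s) := by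
      apply Summable.tsum_le_tsum _ (hsg.mul_right a) hsB
      intro t
      exact mul_le_mul_of_nonneg_left ((hQ.pow (t+1)).le_mulVec (fun j => (hab j).1) s)
        (pow_nonneg h0 t)
    rw [tsum_geom_const h0 h1] at hdiv
    calc a = (1 - γ) * (a / (1 - γ)) := by field_simp
      _ ≤ (1 - γ) * ∑' t : ℕ, γ ^ t * ((Q ^ (t + 1) *ᵥ h) s) :=
          mul_le_mul_of_nonneg_left hdiv (le_of_lt h1γ)
  · have : ∑' t : ℕ, γ ^ t * ((Q ^ (t + 1) *ᵥ h) s) ≤ ∑' t : ℕ, γ ^ t * b := by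
      apply Summable.tsum_le_tsum _ hsB (hsg.mul_right b)
      intro t
      exact mul_le_mul_of_nonneg_left ((hQ.pow (t+1)).mulVec_le (fun j => (hab j).2) s)
        (pow_nonneg h0 t)
    rw [tsum_geom_const h0 h1] at this
    calc (1-γ) * ∑' t : ℕ, γ ^ t * ((Q ^ (t + 1) *ᵥ h) s) ≤ (1-γ) * (b / (1-γ)) :=
          mul_le_mul_of_nonneg_left this (le_of_lt h1γ)
      _ = b := by field_simp

end series


section series2
variable {Q : Matrix S S ℝ} {γ : ℝ}

lemma tendsto_pow_mulVec_zero (hQ : RowStoch Q) (h0 : 0 ≤ γ) (h1 : γ < 1) (v : S → ℝ) (s : S) :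
    Tendsto (fun N : ℕ => γ ^ N * ((Q ^ N *ᵥ v) s)) atTop (𝓝 0) := by
  obtain ⟨C, hC0, hC⟩ := exists_abs_bound v
  refine squeeze_zero_norm (fun N => ?_)
    (by simpa using (tendsto_pow_atTop_nhds_zero_of_lt_one h0 h1).const_mul C :
      Tendsto (fun N : ℕ => C * γ ^ N) atTop (𝓝 0))
  rw [Real.norm_eq_abs, abs_mul, abs_pow, abs_of_nonneg h0, mul_comm]
  exact mul_le_mul_of_nonneg_right ((hQ.pow N).abs_mulVec_le hC s) (pow_nonneg h0 N)

/-- Partial-sum supersolution comparison. -/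
lemma tsum_le_of_superfixed (hQ : RowStoch Q) (h0 : 0 ≤ γ) (h1 : γ < 1) {rq v : S → ℝ}
    (hge : ∀ j, rq j + γ * ((Q *ᵥ v) j) ≤ v j) (s : S) :
    ∑' t : ℕ, γ ^ t * ((Q ^ t *ᵥ rq) s) ≤ v s := by
  have key : ∀ N : ℕ, ∀ j,
      (∑ t ∈ Finset.range N, γ ^ t * ((Q ^ t *ᵥ rq) j)) + γ ^ N * ((Q ^ N *ᵥ v) j) ≤ v j := by
    intro N
    induction N with
    | zero => intro j; simp
    | succ n ih =>
        intro j
        have hmono : (Q ^ n *ᵥ (fun i => rq i + γ * ((Q *ᵥ v) i))) j ≤ (Q ^ n *ᵥ v) j :=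
          (hQ.pow n).mulVec_mono hge j
        have hsplit : (Q ^ n *ᵥ (fun i => rq i + γ * ((Q *ᵥ v) i))) j
            = (Q ^ n *ᵥ rq) j + γ * ((Q ^ (n+1) *ᵥ v) j) := by
          have : (fun i => rq i + γ * ((Q *ᵥ v) i)) = rq + γ • (Q *ᵥ v) := by
            funext i; simp
          rw [this, Matrix.mulVec_add, Matrix.mulVec_smul]
          simp [Matrix.mulVec_mulVec, ← pow_succ]
        rw [Finset.sum_range_succ]
        have h2 : γ ^ n * ((Q ^ n *ᵥ rq) j + γ * ((Q ^ (n+1) *ᵥ v) j))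
            ≤ γ ^ n * ((Q ^ n *ᵥ v) j) :=
          mul_le_mul_of_nonneg_left (hsplit ▸ hmono) (pow_nonneg h0 n)
        calc (∑ t ∈ Finset.range n, γ ^ t * ((Q ^ t *ᵥ rq) j)) + γ ^ n * ((Q ^ n *ᵥ rq) j)
              + γ ^ (n+1) * ((Q ^ (n+1) *ᵥ v) j)
            = (∑ t ∈ Finset.range n, γ ^ t * ((Q ^ t *ᵥ rq) j))
              + γ ^ n * ((Q ^ n *ᵥ rq) j + γ * ((Q ^ (n+1) *ᵥ v) j)) := by ring
          _ ≤ (∑ t ∈ Finset.range n, γ ^ t * ((Q ^ t *ᵥ rq) j)) + γ ^ n * ((Q ^ n *ᵥ v) j) := by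
              linarith [h2]
          _ ≤ v j := ih j
  have hsum : Summable (fun t : ℕ => γ ^ t * ((Q ^ t *ᵥ rq) s)) :=
    summable_geom_mulVec hQ h0 h1 rq s
  have hlim : Tendsto (fun N : ℕ =>
      (∑ t ∈ Finset.range N, γ ^ t * ((Q ^ t *ᵥ rq) s)) + γ ^ N * ((Q ^ N *ᵥ v) s)) atTop
      (𝓝 (∑' t : ℕ, γ ^ t * ((Q ^ t *ᵥ rq) s))) := by
    have h3 := hsum.hasSum.tendsto_sum_nat.add (tendsto_pow_mulVec_zero hQ h0 h1 v s)
    simpa using h3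
  exact le_of_tendsto hlim (Eventually.of_forall (fun N => key N s))

/-- Fixed-point characterization of the discounted value. -/
lemma tsum_eq_of_fixed (hQ : RowStoch Q) (h0 : 0 ≤ γ) (h1 : γ < 1) {rq v : S → ℝ}
    (hfix : ∀ j, v j = rq j + γ * ((Q *ᵥ v) j)) (s : S) :
    v s = ∑' t : ℕ, γ ^ t * ((Q ^ t *ᵥ rq) s) := by
  have key : ∀ N : ℕ, ∀ j,
      v j = (∑ t ∈ Finset.range N, γ ^ t * ((Q ^ t *ᵥ rq) j)) + γ ^ N * ((Q ^ N *ᵥ v) j) := by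
    intro N
    induction N with
    | zero => intro j; simp
    | succ n ih =>
        intro j
        have hmono : (Q ^ n *ᵥ (fun i => rq i + γ * ((Q *ᵥ v) i))) j = (Q ^ n *ᵥ v) j := by
          congr 1
          funext i
          exact (hfix i).symm
        have hsplit : (Q ^ n *ᵥ (fun i => rq i + γ * ((Q *ᵥ v) i))) j
            = (Q ^ n *ᵥ rq) j + γ * ((Q ^ (n+1) *ᵥ v) j) := by
          have : (fun i => rq i + γ * ((Q *ᵥ v) i)) = rq + γ • (Q *ᵥ v) := by
            funext i; simp
          rw [this, Matrix.mulVec_add, Matrix.mulVec_smul]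
          simp [Matrix.mulVec_mulVec, ← pow_succ]
        rw [Finset.sum_range_succ]
        have h2 : γ ^ n * ((Q ^ n *ᵥ v) j)
            = γ ^ n * ((Q ^ n *ᵥ rq) j) + γ ^ (n+1) * ((Q ^ (n+1) *ᵥ v) j) := by
          rw [← hmono, hsplit]; ring
        rw [ih j, h2]
        ring
  have hsum : Summable (fun t : ℕ => γ ^ t * ((Q ^ t *ᵥ rq) s)) :=
    summable_geom_mulVec hQ h0 h1 rq s
  have hlim : Tendsto (fun N : ℕ =>
      (∑ t ∈ Finset.range N, γ ^ t * ((Q ^ t *ᵥ rq) s)) + γ ^ N * ((Q ^ N *ᵥ v) s)) atTop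
      (𝓝 (∑' t : ℕ, γ ^ t * ((Q ^ t *ᵥ rq) s))) := by
    have h3 := hsum.hasSum.tendsto_sum_nat.add (tendsto_pow_mulVec_zero hQ h0 h1 v s)
    simpa using h3
  have hconst : Tendsto (fun N : ℕ =>
      (∑ t ∈ Finset.range N, γ ^ t * ((Q ^ t *ᵥ rq) s)) + γ ^ N * ((Q ^ N *ᵥ v) s)) atTop
      (𝓝 (v s)) := by
    have heq : (fun N : ℕ =>
        (∑ t ∈ Finset.range N, γ ^ t * ((Q ^ t *ᵥ rq) s)) + γ ^ N * ((Q ^ N *ᵥ v) s))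
        = fun _ : ℕ => v s := by
      funext N
      exact (key N s).symm
    rw [heq]
    exact tendsto_const_nhds
  exact tendsto_nhds_unique hconst hlim

/-- Master upper bound. -/
lemma tsum_upper_master (hQ : RowStoch Q) (h0 : 0 ≤ γ) (h1 : γ < 1) {rq h : S → ℝ}
    {ρc a b : ℝ} (hh : ∀ j, a ≤ h j ∧ h j ≤ b)
    (hle : ∀ j, rq j ≤ ρc + (h j - (Q *ᵥ h) j)) (s : S) :
    ∑' t : ℕ, γ ^ t * ((Q ^ t *ᵥ rq) s) ≤ ρc / (1 - γ) + (h s - a) := by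
  have hmono := tsum_geom_mono hQ h0 h1 (w := (fun _ => ρc) + (h - Q *ᵥ h)) (v := rq)
    (fun j => by simpa using hle j) s
  have hs1 : Summable (fun t : ℕ => γ ^ t * ((Q ^ t *ᵥ (fun _ => ρc)) s)) :=
    summable_geom_mulVec hQ h0 h1 _ s
  have hs2 : Summable (fun t : ℕ => γ ^ t * ((Q ^ t *ᵥ (h - Q *ᵥ h)) s)) :=
    summable_geom_mulVec hQ h0 h1 _ s
  have heq : ∑' t : ℕ, γ ^ t * ((Q ^ t *ᵥ ((fun _ => ρc) + (h - Q *ᵥ h))) s)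
      = (∑' t : ℕ, γ ^ t * ((Q ^ t *ᵥ (fun _ => ρc)) s))
        + ∑' t : ℕ, γ ^ t * ((Q ^ t *ᵥ (h - Q *ᵥ h)) s) := by
    rw [← Summable.tsum_add hs1 hs2]
    congr 1
    funext t
    rw [Matrix.mulVec_add]
    simp
    ring
  rw [heq, tsum_geom_mulVec_const hQ h0 h1, tsum_geom_sub_mulVec hQ h0 h1] at hmono
  have hb := (geom_avg_bounds hQ h0 h1 hh s).1
  linarith

/-- Master lower bound. -/
lemma tsum_lower_master (hQ : RowStoch Q) (h0 : 0 ≤ γ) (h1 : γ < 1) {rq h : S → ℝ}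
    {ρc a b : ℝ} (hh : ∀ j, a ≤ h j ∧ h j ≤ b)
    (hge : ∀ j, ρc + (h j - (Q *ᵥ h) j) ≤ rq j) (s : S) :
    ρc / (1 - γ) + (h s - b) ≤ ∑' t : ℕ, γ ^ t * ((Q ^ t *ᵥ rq) s) := by
  have hmono := tsum_geom_mono hQ h0 h1 (v := (fun _ => ρc) + (h - Q *ᵥ h)) (w := rq)
    (fun j => by simpa using hge j) s
  have hs1 : Summable (fun t : ℕ => γ ^ t * ((Q ^ t *ᵥ (fun _ => ρc)) s)) :=
    summable_geom_mulVec hQ h0 h1 _ s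
  have hs2 : Summable (fun t : ℕ => γ ^ t * ((Q ^ t *ᵥ (h - Q *ᵥ h)) s)) :=
    summable_geom_mulVec hQ h0 h1 _ s
  have heq : ∑' t : ℕ, γ ^ t * ((Q ^ t *ᵥ ((fun _ => ρc) + (h - Q *ᵥ h))) s)
      = (∑' t : ℕ, γ ^ t * ((Q ^ t *ᵥ (fun _ => ρc)) s))
        + ∑' t : ℕ, γ ^ t * ((Q ^ t *ᵥ (h - Q *ᵥ h)) s) := by
    rw [← Summable.tsum_add hs1 hs2]
    congr 1
    funext t
    rw [Matrix.mulVec_add]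
    simp
    ring
  rw [heq, tsum_geom_mulVec_const hQ h0 h1, tsum_geom_sub_mulVec hQ h0 h1] at hmono
  have hb := (geom_avg_bounds hQ h0 h1 hh s).2
  linarith

end series2

section Toeplitz

lemma summable_succ_mul_geometric {γ : ℝ} (h0 : 0 ≤ γ) (h1 : γ < 1) :
    Summable (fun N : ℕ => ((N : ℝ) + 1) * γ ^ N) := by
  have h : ‖γ‖ < 1 := by rwa [Real.norm_eq_abs, abs_of_nonneg h0]
  have h2 := summable_pow_mul_geometric_of_norm_lt_one (R := ℝ) 1 h
  have h3 := summable_geometric_of_lt_one h0 h1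
  apply (h2.add h3).congr
  intro N
  simp
  ring

lemma tsum_succ_mul_geometric {γ : ℝ} (h0 : 0 ≤ γ) (h1 : γ < 1) :
    ∑' N : ℕ, ((N : ℝ) + 1) * γ ^ N = ((1 - γ) ^ 2)⁻¹ := by
  have h : ‖γ‖ < 1 := by rwa [Real.norm_eq_abs, abs_of_nonneg h0]
  have h2 := summable_pow_mul_geometric_of_norm_lt_one (R := ℝ) 1 h
  have h2' : Summable (fun N : ℕ => (N : ℝ) * γ ^ N) := by
    apply h2.congr; intro n; simp
  have h3 : Summable (fun N : ℕ => γ ^ N) := summable_geometric_of_lt_one h0 h1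
  have heq : (fun N : ℕ => ((N : ℝ) + 1) * γ ^ N)
      = fun N : ℕ => (N : ℝ) * γ ^ N + γ ^ N := by
    funext N; ring
  rw [heq, Summable.tsum_add h2' h3, tsum_coe_mul_geometric_of_norm_lt_one h,
    tsum_geometric_of_lt_one h0 h1]
  have hne : (1 : ℝ) - γ ≠ 0 := by intro hc; rw [sub_eq_zero] at hc; exact absurd hc.symm (ne_of_lt h1)
  field_simp
  ring

lemma abs_partial_le {b : ℕ → ℝ} {C : ℝ} (hb : ∀ t, |b t| ≤ C) (M : ℕ) :
    |∑ t ∈ Finset.range M, b t| ≤ M * C := by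
  calc |∑ t ∈ Finset.range M, b t| ≤ ∑ t ∈ Finset.range M, |b t| :=
      Finset.abs_sum_le_sum_abs _ _
    _ ≤ ∑ _t ∈ Finset.range M, C := Finset.sum_le_sum fun t _ => hb t
    _ = M * C := by simp [mul_comm]

lemma summable_geom_partial {γ : ℝ} (h0 : 0 ≤ γ) (h1 : γ < 1) {b : ℕ → ℝ} {C : ℝ}
    (hb : ∀ t, |b t| ≤ C) (k : ℕ) :
    Summable (fun N : ℕ => γ ^ N * (∑ t ∈ Finset.range (N + k), b t)) := by
  have hC0 : 0 ≤ C := le_trans (abs_nonneg _) (hb 0)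
  apply Summable.of_norm_bounded
    (g := fun N : ℕ => (((N : ℝ) + 1) * γ ^ N) * ((k + 1) * C))
  · exact (summable_succ_mul_geometric h0 h1).mul_right _
  · intro N
    rw [Real.norm_eq_abs, abs_mul, abs_pow, abs_of_nonneg h0]
    calc γ ^ N * |∑ t ∈ Finset.range (N + k), b t| ≤ γ ^ N * (((N + k :ℕ):ℝ) * C) :=
        mul_le_mul_of_nonneg_left (abs_partial_le hb (N + k)) (pow_nonneg h0 N)
      _ ≤ (((N : ℝ) + 1) * γ ^ N) * ((k + 1) * C) := by
        have hNk : ((N + k : ℕ) : ℝ) * C ≤ (((N:ℝ) + 1) * ((k:ℝ) + 1)) * C := by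
          apply mul_le_mul_of_nonneg_right _ hC0
          push_cast
          nlinarith [Nat.cast_nonneg (α := ℝ) N, Nat.cast_nonneg (α := ℝ) k]
        calc γ ^ N * (((N + k : ℕ):ℝ) * C) ≤ γ ^ N * ((((N:ℝ) + 1) * ((k:ℝ) + 1)) * C) :=
            mul_le_mul_of_nonneg_left hNk (pow_nonneg h0 N)
          _ = (((N : ℝ) + 1) * γ ^ N) * ((k + 1) * C) := by ring

/-- Abel summation to partial sums. -/
lemma tsum_geom_eq_partial {γ : ℝ} (h0 : 0 ≤ γ) (h1 : γ < 1) {b : ℕ → ℝ} {C : ℝ}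
    (hb : ∀ t, |b t| ≤ C) :
    ∑' t : ℕ, γ ^ t * b t
      = (1 - γ) * ∑' N : ℕ, γ ^ N * (∑ t ∈ Finset.range (N + 1), b t) := by
  have hS1 : Summable (fun N : ℕ => γ ^ N * (∑ t ∈ Finset.range (N + 1), b t)) :=
    summable_geom_partial h0 h1 hb 1
  have hS0 : Summable (fun N : ℕ => γ ^ N * (∑ t ∈ Finset.range N, b t)) := by
    have := summable_geom_partial h0 h1 hb 0
    simpa using this
  have hshift : ∑' N : ℕ, γ ^ (N + 1) * (∑ t ∈ Finset.range (N + 1), b t)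
      = ∑' N : ℕ, γ ^ N * (∑ t ∈ Finset.range N, b t) := by
    rw [Summable.tsum_eq_zero_add hS0]
    simp
  set B := ∑' N : ℕ, γ ^ N * (∑ t ∈ Finset.range (N + 1), b t) with hB
  have hγB : γ * B = ∑' N : ℕ, γ ^ (N + 1) * (∑ t ∈ Finset.range (N + 1), b t) := by
    rw [hB, ← tsum_mul_left]
    congr 1
    funext N
    ring
  have hsub : B - γ * B = ∑' t : ℕ, γ ^ t * b t := by
    rw [hγB, hshift, ← Summable.tsum_sub hS1 hS0]
    congr 1
    funext N
    rw [Finset.sum_range_succ]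
    ring
  linarith [hsub]

/-- Toeplitz/Abelian theorem: Cesàro convergence implies Abel convergence. -/
lemma toeplitz_abel {b : ℕ → ℝ} {C L : ℝ} (hb : ∀ t, |b t| ≤ C)
    (hσ : Tendsto (fun N : ℕ => ((N : ℝ))⁻¹ * ∑ t ∈ Finset.range N, b t) atTop (𝓝 L)) :
    Tendsto (fun γ : ℝ => (1 - γ) * ∑' t : ℕ, γ ^ t * b t) (𝓝[<] (1:ℝ)) (𝓝 L) := by
  have hC0 : 0 ≤ C := le_trans (abs_nonneg _) (hb 0)
  set σ : ℕ → ℝ := fun N => ((N : ℝ) + 1)⁻¹ * ∑ t ∈ Finset.range (N + 1), b t with hσdef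
  have hσ' : Tendsto σ atTop (𝓝 L) := by
    have h1 := hσ.comp (tendsto_add_atTop_nat 1)
    apply h1.congr
    intro N
    simp only [Function.comp_apply, hσdef]
    push_cast
    ring_nf
  have hσbound : ∀ N, |σ N - L| ≤ C + |L| := by
    intro N
    have hpos : (0:ℝ) < (N : ℝ) + 1 := by positivity
    have h1 : |σ N| ≤ C := by
      rw [hσdef]
      simp only []
      rw [abs_mul, abs_inv, abs_of_pos hpos]
      have h2 : |∑ t ∈ Finset.range (N + 1), b t| ≤ ((N:ℝ) + 1) * C := by
        have := abs_partial_le hb (N + 1)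
        push_cast at this
        linarith
      calc ((N : ℝ) + 1)⁻¹ * |∑ t ∈ Finset.range (N + 1), b t|
          ≤ ((N : ℝ) + 1)⁻¹ * (((N:ℝ) + 1) * C) :=
            mul_le_mul_of_nonneg_left h2 (by positivity)
        _ = C := by field_simp
    calc |σ N - L| ≤ |σ N| + |L| := abs_sub _ _
      _ ≤ C + |L| := by linarith
  set D := C + |L| + 1 with hD
  have hDpos : (1:ℝ) ≤ D := by
    have := abs_nonneg L
    rw [hD]
    linarith
  rw [Metric.tendsto_nhdsWithin_nhds]
  intro ε hε
  obtain ⟨T, hT⟩ := (Metric.tendsto_atTop.1 hσ') (ε/4) (by linarith)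
  have hDT : (0:ℝ) ≤ D * (T:ℝ)^2 := by positivity
  refine ⟨min (1/2 : ℝ) (ε / (4 * (D * (T:ℝ)^2 + 1))), lt_min (by norm_num) (by positivity), ?_⟩
  intro γ hγlt hγdist
  have hγ1 : γ < 1 := hγlt
  have hdist : |γ - 1| < min (1/2 : ℝ) (ε / (4 * (D * (T:ℝ)^2 + 1))) := by
    rwa [Real.dist_eq] at hγdist
  have h1γup : 1 - γ < min (1/2 : ℝ) (ε / (4 * (D * (T:ℝ)^2 + 1))) := by
    have := neg_le_abs (γ - 1)
    have h2 := hdist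
    rw [abs_sub_comm] at h2
    have := le_abs_self (1 - γ)
    linarith
  have h1γhalf : 1 - γ < 1/2 := lt_of_lt_of_le h1γup (min_le_left _ _)
  have h1γeps : 1 - γ < ε / (4 * (D * (T:ℝ)^2 + 1)) := lt_of_lt_of_le h1γup (min_le_right _ _)
  have hγ0 : 0 ≤ γ := by linarith
  have hpos1γ : 0 < 1 - γ := by linarith
  have hS1 : Summable (fun N : ℕ => γ ^ N * (∑ t ∈ Finset.range (N + 1), b t)) :=
    summable_geom_partial hγ0 hγ1 hb 1
  have hkey : ∀ N : ℕ, (∑ t ∈ Finset.range (N + 1), b t) = ((N:ℝ)+1) * σ N := by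
    intro N
    rw [hσdef]
    simp only []
    have hpos : ((N : ℝ) + 1) ≠ 0 := by positivity
    field_simp
  set g : ℕ → ℝ := fun N => (((N:ℝ)+1) * γ^N) * (σ N - L) with hgdef
  have hgabs : ∀ N, |g N| ≤ (((N:ℝ)+1) * γ^N) * D := by
    intro N
    rw [hgdef]
    simp only []
    rw [abs_mul, abs_of_nonneg (by positivity : (0:ℝ) ≤ ((N:ℝ)+1) * γ^N)]
    apply mul_le_mul_of_nonneg_left _ (by positivity)
    calc |σ N - L| ≤ C + |L| := hσbound N
      _ ≤ D := by rw [hD]; linarith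
  have hg : Summable g :=
    Summable.of_norm_bounded ((summable_succ_mul_geometric hγ0 hγ1).mul_right D)
      (fun N => by rw [Real.norm_eq_abs]; exact hgabs N)
  have hid : (1-γ) * (∑' t : ℕ, γ^t * b t) - L = (1-γ)^2 * ∑' N, g N := by
    have h3 := tsum_geom_eq_partial hγ0 hγ1 hb
    have hsummL : Summable (fun N : ℕ => (((N:ℝ)+1)*γ^N) * L) :=
      (summable_succ_mul_geometric hγ0 hγ1).mul_right L
    have h4 : ∑' N, g N = (∑' N : ℕ, γ^N * (∑ t ∈ Finset.range (N+1), b t))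
        - ((1-γ)^2)⁻¹ * L := by
      calc ∑' N, g N
          = ∑' N : ℕ, (γ^N * (∑ t ∈ Finset.range (N+1), b t) - (((N:ℝ)+1)*γ^N) * L) := by
            congr 1
            funext N
            rw [hgdef]
            simp only []
            rw [hkey N]
            ring
        _ = (∑' N : ℕ, γ^N * (∑ t ∈ Finset.range (N+1), b t))
            - ∑' N : ℕ, (((N:ℝ)+1)*γ^N) * L := Summable.tsum_sub hS1 hsummL
        _ = (∑' N : ℕ, γ^N * (∑ t ∈ Finset.range (N+1), b t)) - ((1-γ)^2)⁻¹ * L := by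
            rw [tsum_mul_right, tsum_succ_mul_geometric hγ0 hγ1]
    rw [h3, h4]
    have hne : ((1:ℝ)-γ)^2 ≠ 0 := by positivity
    field_simp
  rw [Real.dist_eq, hid]
  -- bound the tsum
  have hsplit := Summable.sum_add_tsum_nat_add T hg
  have hfin : |∑ N ∈ Finset.range T, g N| ≤ D * (T:ℝ)^2 := by
    calc |∑ N ∈ Finset.range T, g N| ≤ ∑ N ∈ Finset.range T, |g N| :=
        Finset.abs_sum_le_sum_abs _ _
      _ ≤ ∑ _N ∈ Finset.range T, (T:ℝ) * D := by
          apply Finset.sum_le_sum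
          intro N hN
          have hNT : (N:ℝ) + 1 ≤ (T:ℝ) := by
            have := Finset.mem_range.1 hN
            exact_mod_cast Nat.succ_le_of_lt this
          have hγpow : γ ^ N ≤ 1 := pow_le_one₀ hγ0 (le_of_lt hγ1)
          calc |g N| ≤ (((N:ℝ)+1) * γ^N) * D := hgabs N
            _ ≤ (((N:ℝ)+1) * 1) * D := by
                apply mul_le_mul_of_nonneg_right _ (by linarith)
                apply mul_le_mul_of_nonneg_left hγpow (by positivity)
            _ ≤ (T:ℝ) * D := by
                apply mul_le_mul_of_nonneg_right _ (by linarith)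
                linarith
      _ = (T:ℝ) * ((T:ℝ) * D) := by
          rw [Finset.sum_const, Finset.card_range]
          simp [mul_comm, mul_assoc]
      _ = D * (T:ℝ)^2 := by ring
  have htailabs : Summable (fun i : ℕ => |g (i + T)|) := by
    have := hg.abs
    exact (summable_nat_add_iff T).2 this
  have hbase : Summable (fun N : ℕ => (((N:ℝ)+1)*γ^N) * (ε/4)) :=
    (summable_succ_mul_geometric hγ0 hγ1).mul_right _
  have hbase' : Summable (fun i : ℕ => ((((i + T :ℕ):ℝ)+1)*γ^(i+T)) * (ε/4)) :=
    (summable_nat_add_iff T).2 hbase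
  have htail : |∑' i : ℕ, g (i + T)| ≤ ((1-γ)^2)⁻¹ * (ε/4) := by
    have h5 : |∑' i : ℕ, g (i + T)| ≤ ∑' i : ℕ, |g (i + T)| := by
      have := norm_tsum_le_tsum_norm (f := fun i : ℕ => g (i + T)) (by simpa using htailabs)
      simpa using this
    have h6 : ∑' i : ℕ, |g (i + T)| ≤ ∑' i : ℕ, ((((i + T:ℕ):ℝ)+1)*γ^(i+T)) * (ε/4) := by
      apply Summable.tsum_le_tsum _ htailabs hbase'
      intro i
      rw [hgdef]
      simp only []
      rw [abs_mul, abs_of_nonneg (by positivity : (0:ℝ) ≤ (((i+T:ℕ):ℝ)+1) * γ^(i+T))]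
      apply mul_le_mul_of_nonneg_left _ (by positivity)
      have h7 := hT (i + T) (Nat.le_add_left T i)
      rw [Real.dist_eq] at h7
      exact le_of_lt h7
    have h8 : ∑' i : ℕ, ((((i + T:ℕ):ℝ)+1)*γ^(i+T)) * (ε/4) ≤ ((1-γ)^2)⁻¹ * (ε/4) := by
      have h9 := Summable.sum_add_tsum_nat_add T hbase
      have h10 : 0 ≤ ∑ N ∈ Finset.range T, (((N:ℝ)+1)*γ^N) * (ε/4) := by
        apply Finset.sum_nonneg
        intro N _
        positivity
      have h11 : ∑' N : ℕ, (((N:ℝ)+1)*γ^N) * (ε/4) = ((1-γ)^2)⁻¹ * (ε/4) := by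
        rw [tsum_mul_right, tsum_succ_mul_geometric hγ0 hγ1]
      rw [h11] at h9
      linarith [h9]
    linarith
  have hlast : |(1-γ)^2 * ∑' N, g N| < ε := by
    rw [abs_mul, abs_of_nonneg (by positivity : (0:ℝ) ≤ (1-γ)^2)]
    have h12 : |∑' N, g N| ≤ D * (T:ℝ)^2 + ((1-γ)^2)⁻¹ * (ε/4) := by
      rw [← hsplit]
      calc |∑ N ∈ Finset.range T, g N + ∑' i : ℕ, g (i + T)|
          ≤ |∑ N ∈ Finset.range T, g N| + |∑' i : ℕ, g (i + T)| := abs_add_le _ _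
        _ ≤ D * (T:ℝ)^2 + ((1-γ)^2)⁻¹ * (ε/4) := add_le_add hfin htail
    have h13 : (1-γ)^2 * |∑' N, g N| ≤ (1-γ)^2 * (D * (T:ℝ)^2) + ε/4 := by
      have h14 : (1-γ)^2 * (((1-γ)^2)⁻¹ * (ε/4)) = ε/4 := by
        have hne : ((1:ℝ)-γ)^2 ≠ 0 := by positivity
        field_simp
      calc (1-γ)^2 * |∑' N, g N|
          ≤ (1-γ)^2 * (D * (T:ℝ)^2 + ((1-γ)^2)⁻¹ * (ε/4)) :=
            mul_le_mul_of_nonneg_left h12 (by positivity)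
        _ = (1-γ)^2 * (D * (T:ℝ)^2) + (1-γ)^2 * (((1-γ)^2)⁻¹ * (ε/4)) := by ring
        _ = (1-γ)^2 * (D * (T:ℝ)^2) + ε/4 := by rw [h14]
    have h15 : (1-γ)^2 * (D * (T:ℝ)^2) < ε/4 := by
      have h16 : (1-γ)^2 ≤ (1-γ) := by nlinarith
      have hX : (0:ℝ) < D*(T:ℝ)^2 + 1 := by positivity
      have h18 := mul_lt_mul_of_pos_right h1γeps hX
      have h19 : ε / (4 * (D*(T:ℝ)^2+1)) * (D*(T:ℝ)^2+1) = ε/4 := by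
        have hX' : (D*(T:ℝ)^2+1) ≠ 0 := by positivity
        field_simp
      rw [h19] at h18
      nlinarith
    linarith
  exact hlast

end Toeplitz

end AuxBasic

section MDPLemmas

variable [Fintype S] [Fintype A] [DecidableEq S] [DecidableEq A]
  [Nonempty S] [Nonempty A]

lemma polMat_rowStoch {p : S → A → S → ℝ} (hp : IsKernel p) {q : S → A → ℝ}
    (hq : IsPolicy q) : RowStoch (polMat p q) := by
  constructor
  · intro i j
    exact Finset.sum_nonneg fun a _ => mul_nonneg ((hq i).1 a) ((hp i a).1 j)
  · intro i
    simp only [polMat, Matrix.of_apply]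
    rw [Finset.sum_comm]
    calc (∑ a, ∑ j, q i a * p i a j) = ∑ a, q i a * ∑ j, p i a j := by
          simp [Finset.mul_sum]
      _ = 1 := by
          simp only [(fun a => (hp i a).2)]
          simpa using (hq i).2

lemma polRew_mem {r : S → A → ℝ} (hr : ∀ s a, r s a ∈ Set.Icc (0:ℝ) 1) {q : S → A → ℝ}
    (hq : IsPolicy q) (s : S) : 0 ≤ polRew r q s ∧ polRew r q s ≤ 1 := by
  constructor
  · exact Finset.sum_nonneg fun a _ => mul_nonneg ((hq s).1 a) (hr s a).1
  · calc (∑ a, q s a * r s a) ≤ ∑ a, q s a * 1 :=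
        Finset.sum_le_sum fun a _ => mul_le_mul_of_nonneg_left (hr s a).2 ((hq s).1 a)
      _ = 1 := by simpa using (hq s).2

lemma isPolicy_detPol (d : S → A) : IsPolicy (detPol (S := S) d) := by
  intro s
  constructor
  · intro a
    by_cases h : a = d s <;> simp [detPol, h]
  · simp [detPol]

lemma polMat_detPol (p : S → A → S → ℝ) (d : S → A) (s s' : S) :
    polMat p (detPol d) s s' = p s (d s) s' := by
  simp only [polMat, detPol, Matrix.of_apply]
  rw [Finset.sum_eq_single (d s)]
  · simp
  · intro b _ hb; simp [hb]
  · intro h; exact absurd (Finset.mem_univ _) h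

lemma polRew_detPol (r : S → A → ℝ) (d : S → A) (s : S) :
    polRew r (detPol d) s = r s (d s) := by
  simp only [polRew, detPol]
  rw [Finset.sum_eq_single (d s)]
  · simp
  · intro b _ hb; simp [hb]
  · intro h; exact absurd (Finset.mem_univ _) h

lemma dval_apply {p : S → A → S → ℝ} (hp : IsKernel p) {q : S → A → ℝ} (hq : IsPolicy q)
    {γ : ℝ} (h0 : 0 ≤ γ) (h1 : γ < 1) (r : S → A → ℝ) (s : S) :
    dval p r γ q s = ∑' t : ℕ, γ ^ t * (((polMat p q) ^ t *ᵥ polRew r q) s) := by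
  have hsum : Summable (fun t : ℕ => γ ^ t • ((polMat p q) ^ t *ᵥ polRew r q)) := by
    rw [Pi.summable]
    intro j
    have := summable_geom_mulVec (polMat_rowStoch hp hq) h0 h1 (polRew r q) j
    simpa [smul_eq_mul] using this
  rw [dval, resApply, tsum_apply hsum]
  simp [smul_eq_mul]

end MDPLemmas

section Bellman

variable [Fintype S] [Fintype A] [DecidableEq S] [DecidableEq A]
  [Nonempty S] [Nonempty A]

lemma abs_sup'_sub_sup'_le {f g : A → ℝ} {c : ℝ}
    (h : ∀ a, |f a - g a| ≤ c) :
    |Finset.univ.sup' Finset.univ_nonempty f - Finset.univ.sup' Finset.univ_nonempty g| ≤ c := by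
  have h1 : Finset.univ.sup' Finset.univ_nonempty f ≤
      Finset.univ.sup' Finset.univ_nonempty g + c := by
    apply Finset.sup'_le
    intro a _
    have h2 := Finset.le_sup' g (Finset.mem_univ a)
    have h3 := (abs_le.1 (h a)).2
    linarith
  have h2 : Finset.univ.sup' Finset.univ_nonempty g ≤
      Finset.univ.sup' Finset.univ_nonempty f + c := by
    apply Finset.sup'_le
    intro a _
    have h2 := Finset.le_sup' f (Finset.mem_univ a)
    have h3 := (abs_le.1 (h a)).1
    linarith
  rw [abs_le]
  constructor <;> linarith

/-- The Bellman optimality operator. -/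
noncomputable def Lop (p : S → A → S → ℝ) (r : S → A → ℝ) (γ : ℝ) (v : S → ℝ) : S → ℝ :=
  fun s => Finset.univ.sup' Finset.univ_nonempty (fun a => r s a + γ * ∑ s', p s a s' * v s')

lemma exists_opt_value {p : S → A → S → ℝ} (hp : IsKernel p) {r : S → A → ℝ}
    (hr : ∀ s a, r s a ∈ Set.Icc (0:ℝ) 1) {γ : ℝ} (h0 : 0 ≤ γ) (h1 : γ < 1) :
    ∃ V : S → ℝ, (∃ d : S → A, dval p r γ (detPol d) = V) ∧
      (∀ q : S → A → ℝ, IsPolicy q → ∀ s, dval p r γ q s ≤ V s) ∧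
      (∀ s a, r s a + γ * ∑ s', p s a s' * V s' ≤ V s) := by
  classical
  set L := Lop p r γ with hLdef
  have hlip : ∀ v w : S → ℝ, dist (L v) (L w) ≤ γ * dist v w := by
    intro v w
    rw [dist_pi_le_iff (by positivity)]
    intro s
    rw [Real.dist_eq]
    apply abs_sup'_sub_sup'_le
    intro a
    have hsum : (∑ s', p s a s' * v s') - (∑ s', p s a s' * w s')
        = ∑ s', p s a s' * (v s' - w s') := by
      rw [← Finset.sum_sub_distrib]
      congr 1
      funext s'
      ring
    have heq : (r s a + γ * ∑ s', p s a s' * v s') - (r s a + γ * ∑ s', p s a s' * w s')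
        = γ * ∑ s', p s a s' * (v s' - w s') := by
      rw [← hsum]
      ring
    rw [heq, abs_mul, abs_of_nonneg h0]
    apply mul_le_mul_of_nonneg_left _ h0
    calc |∑ s', p s a s' * (v s' - w s')| ≤ ∑ s', |p s a s' * (v s' - w s')| :=
          Finset.abs_sum_le_sum_abs _ _
      _ ≤ ∑ s', p s a s' * dist v w := by
          apply Finset.sum_le_sum
          intro s' _
          rw [abs_mul, abs_of_nonneg ((hp s a).1 s')]
          apply mul_le_mul_of_nonneg_left _ ((hp s a).1 s')
          rw [← Real.dist_eq]
          exact dist_le_pi_dist v w s'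
      _ = dist v w := by rw [← Finset.sum_mul, (hp s a).2, one_mul]
  have hcontr : ContractingWith ⟨γ, h0⟩ L := by
    constructor
    · exact_mod_cast h1
    · apply LipschitzWith.of_dist_le_mul
      intro v w
      exact hlip v w
  obtain ⟨V, hVfix⟩ : ∃ V, L V = V := ⟨hcontr.fixedPoint L, hcontr.fixedPoint_isFixedPt⟩
  have hVs : ∀ s, V s = Finset.univ.sup' Finset.univ_nonempty
      (fun a => r s a + γ * ∑ s', p s a s' * V s') := by
    intro s
    exact (congrFun hVfix s).symm
  have hle : ∀ s a, r s a + γ * ∑ s', p s a s' * V s' ≤ V s := by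
    intro s a
    rw [hVs s]
    exact Finset.le_sup' (f := fun a => r s a + γ * ∑ s', p s a s' * V s')
      (Finset.mem_univ a)
  -- greedy policy
  have hgreedy : ∀ s, ∃ a, V s = r s a + γ * ∑ s', p s a s' * V s' := by
    intro s
    obtain ⟨a, _, ha⟩ := Finset.exists_mem_eq_sup' (Finset.univ_nonempty)
      (fun a => r s a + γ * ∑ s', p s a s' * V s')
    exact ⟨a, by rw [hVs s, ha]⟩
  choose d hd using hgreedy
  have hQd : RowStoch (polMat p (detPol d)) := polMat_rowStoch hp (isPolicy_detPol d)
  have hfixd : ∀ j, V j = polRew r (detPol d) j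
      + γ * ((polMat p (detPol d) *ᵥ V) j) := by
    intro j
    rw [polRew_detPol]
    have : (polMat p (detPol d) *ᵥ V) j = ∑ s', p j (d j) s' * V s' := by
      simp only [Matrix.mulVec, dotProduct]
      congr 1
      funext s'
      rw [polMat_detPol]
    rw [this]
    exact hd j
  have hdval : dval p r γ (detPol d) = V := by
    funext s
    rw [dval_apply hp (isPolicy_detPol d) h0 h1 r s]
    exact (tsum_eq_of_fixed hQd h0 h1 hfixd s).symm
  refine ⟨V, ⟨d, hdval⟩, ?_, hle⟩
  intro q hq s
  have hQq : RowStoch (polMat p q) := polMat_rowStoch hp hq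
  have hsup : ∀ j, polRew r q j + γ * ((polMat p q *ᵥ V) j) ≤ V j := by
    intro j
    have hswap : (polMat p q *ᵥ V) j = ∑ a, q j a * ∑ s', p j a s' * V s' := by
      simp only [Matrix.mulVec, dotProduct, polMat, Matrix.of_apply]
      calc (∑ s', (∑ a, q j a * p j a s') * V s')
          = ∑ s', ∑ a, q j a * (p j a s' * V s') := by
            congr 1
            funext s'
            rw [Finset.sum_mul]
            congr 1
            funext a
            ring
        _ = ∑ a, ∑ s', q j a * (p j a s' * V s') := Finset.sum_comm
        _ = ∑ a, q j a * ∑ s', p j a s' * V s' := by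
            congr 1
            funext a
            rw [Finset.mul_sum]
    rw [hswap, polRew]
    have : (∑ a, q j a * r j a) + γ * ∑ a, q j a * ∑ s', p j a s' * V s'
        = ∑ a, q j a * (r j a + γ * ∑ s', p j a s' * V s') := by
      rw [Finset.mul_sum, ← Finset.sum_add_distrib]
      congr 1
      funext a
      ring
    rw [this]
    calc (∑ a, q j a * (r j a + γ * ∑ s', p j a s' * V s'))
        ≤ ∑ a, q j a * V j :=
          Finset.sum_le_sum fun a _ =>
            mul_le_mul_of_nonneg_left (hle j a) ((hq j).1 a)
      _ = V j := by rw [← Finset.sum_mul, (hq j).2, one_mul]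
  rw [dval_apply hp hq h0 h1 r s]
  exact tsum_le_of_superfixed hQq h0 h1 hsup s

end Bellman

section Reach

variable [Fintype S] [Fintype A] [DecidableEq S] [DecidableEq A]
  [Nonempty S] [Nonempty A]

lemma reaches_refl {M : Matrix S S ℝ} (s : S) : Reaches M s s :=
  ⟨0, by simp [Matrix.one_apply]⟩

lemma pow_entry_nonneg {M : Matrix S S ℝ} (hM : RowStoch M) (t : ℕ) (i j : S) :
    0 ≤ (M ^ t) i j := (hM.pow t).1 i j

lemma reaches_trans {M : Matrix S S ℝ} (hM : RowStoch M) {x y z : S}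
    (hxy : Reaches M x y) (hyz : Reaches M y z) : Reaches M x z := by
  obtain ⟨t, ht⟩ := hxy
  obtain ⟨t', ht'⟩ := hyz
  refine ⟨t + t', ?_⟩
  have hexp : (M ^ (t + t')) x z = ∑ w, (M ^ t) x w * (M ^ t') w z := by
    rw [pow_add, Matrix.mul_apply]
  rw [hexp]
  have hterm : 0 < (M ^ t) x y * (M ^ t') y z := mul_pos ht ht'
  have hle : (M ^ t) x y * (M ^ t') y z ≤ ∑ w, (M ^ t) x w * (M ^ t') w z :=
    Finset.single_le_sum
      (fun w _ => mul_nonneg (pow_entry_nonneg hM t x w) (pow_entry_nonneg hM t' w z))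
      (Finset.mem_univ y)
  linarith

lemma pos_step_of_pow_succ {M : Matrix S S ℝ} (hM : RowStoch M) {t : ℕ} {x z : S}
    (h : 0 < (M ^ (t + 1)) x z) : ∃ y, 0 < M x y ∧ 0 < (M ^ t) y z := by
  have hexp : (M ^ (t + 1)) x z = ∑ y, M x y * (M ^ t) y z := by
    rw [pow_succ', Matrix.mul_apply]
  rw [hexp] at h
  by_contra hcon
  push_neg at hcon
  have : ∀ y ∈ Finset.univ, M x y * (M ^ t) y z ≤ 0 := by
    intro y _
    rcases lt_or_ge 0 (M x y) with hpos | hle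
    · have h2 := hcon y hpos
      have h3 := pow_entry_nonneg hM t y z
      have h4 : (M ^ t) y z = 0 := le_antisymm h2 h3
      rw [h4, mul_zero]
    · have h2 : M x y = 0 := le_antisymm hle (hM.1 x y)
      rw [h2, zero_mul]
  have := Finset.sum_nonpos this
  linarith

/-- A set closed under positive one-step transitions is closed under reachability. -/
lemma closed_reaches {M : Matrix S S ℝ} (hM : RowStoch M) {C : Set S}
    (hstep : ∀ x ∈ C, ∀ y, 0 < M x y → y ∈ C) :
    ∀ x ∈ C, ∀ y, Reaches M x y → y ∈ C := by
  have key : ∀ t : ℕ, ∀ x ∈ C, ∀ y, 0 < (M ^ t) x y → y ∈ C := by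
    intro t
    induction t with
    | zero =>
        intro x hx y hy
        by_cases hxy : x = y
        · rwa [← hxy]
        · simp [Matrix.one_apply, hxy] at hy
    | succ n ih =>
        intro x hx y hy
        obtain ⟨w, hw1, hw2⟩ := pos_step_of_pow_succ hM hy
        exact ih w (hstep x hx w hw1) y hw2
  rintro x hx y ⟨t, ht⟩
  exact key t x hx y ht

/-- Every nonempty closed set of a finite chain contains a recurrent state. -/
lemma exists_recurrent_closed {M : Matrix S S ℝ} (hM : RowStoch M) {C : Set S}
    (hne : C.Nonempty) (hclosed : ∀ x ∈ C, ∀ y, Reaches M x y → y ∈ C) :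
    ∃ x ∈ C, Recurrent M x := by
  classical
  have key : ∀ n : ℕ, ∀ x, x ∈ C → (Set.ncard {y | Reaches M x y}) ≤ n →
      ∃ z ∈ C, Recurrent M z := by
    intro n
    induction n with
    | zero =>
        intro x hx h0
        exfalso
        have hxmem : x ∈ {y | Reaches M x y} := reaches_refl x
        have hfin : {y | Reaches M x y}.Finite := Set.toFinite _
        have : 0 < Set.ncard {y | Reaches M x y} :=
          (Set.ncard_pos hfin).2 ⟨x, hxmem⟩
        omega
    | succ n ih =>
        intro x hx hcard
        by_cases hrec : Recurrent M x
        · exact ⟨x, hx, hrec⟩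
        · rw [Recurrent] at hrec
          push_neg at hrec
          obtain ⟨y, hxy, hnyx⟩ := hrec
          have hy : y ∈ C := hclosed x hx y hxy
          have hsub : {z | Reaches M y z} ⊆ {z | Reaches M x z} := by
            intro z hz
            exact reaches_trans hM hxy hz
          have hxnot : x ∉ {z | Reaches M y z} := hnyx
          have hxin : x ∈ {z | Reaches M x z} := reaches_refl x
          have hss : {z | Reaches M y z} ⊂ {z | Reaches M x z} :=
            ⟨hsub, fun hsup => hxnot (hsup hxin)⟩
          have hlt : Set.ncard {z | Reaches M y z} < Set.ncard {z | Reaches M x z} :=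
            Set.ncard_lt_ncard hss (Set.toFinite _)
          exact ih y hy (by omega)
  obtain ⟨x, hx⟩ := hne
  exact key (Set.ncard {y | Reaches M x y}) x hx le_rfl

/-- The uniformly randomizing policy. -/
noncomputable def unifPol : S → A → ℝ := fun _ _ => (Fintype.card A : ℝ)⁻¹

lemma isPolicy_unifPol : IsPolicy (unifPol (S := S) (A := A)) := by
  intro s
  have hcard : (0:ℝ) < Fintype.card A := by
    exact_mod_cast Fintype.card_pos
  constructor
  · intro a
    simp only [unifPol]
    positivity
  · simp only [unifPol, Finset.sum_const, Finset.card_univ, nsmul_eq_mul]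
    field_simp

lemma step_pos_action {p : S → A → S → ℝ} (hp : IsKernel p) {q : S → A → ℝ}
    (hq : IsPolicy q) {x y : S} (h : 0 < polMat p q x y) : ∃ a, 0 < p x a y := by
  simp only [polMat, Matrix.of_apply] at h
  by_contra hcon
  push_neg at hcon
  have : ∀ a ∈ Finset.univ, q x a * p x a y ≤ 0 := by
    intro a _
    have h2 : p x a y = 0 := le_antisymm (hcon a) ((hp x a).1 y)
    rw [h2, mul_zero]
  have := Finset.sum_nonpos this
  linarith

lemma unif_step_pos {p : S → A → S → ℝ} (hp : IsKernel p) {x y : S} {a : A}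
    (h : 0 < p x a y) : 0 < polMat p (unifPol) x y := by
  simp only [polMat, Matrix.of_apply]
  have hcard : (0:ℝ) < (Fintype.card A : ℝ) := by exact_mod_cast Fintype.card_pos
  have hterm : 0 < unifPol (S := S) (A := A) x a * p x a y := by
    apply mul_pos _ h
    simp only [unifPol]
    positivity
  have hle : unifPol (S := S) (A := A) x a * p x a y ≤ ∑ a', unifPol (S := S) (A := A) x a' * p x a' y :=
    Finset.single_le_sum
      (fun a' _ => mul_nonneg (by simp only [unifPol]; positivity) ((hp x a').1 y))
      (Finset.mem_univ a)
  linarith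

end Reach

/-- swap lemma -/
lemma polMat_mulVec_swap {A : Type*} [Fintype S] [Fintype A] [DecidableEq S] [Nonempty S]
    (p : S → A → S → ℝ) (q : S → A → ℝ) (v : S → ℝ) (j : S) :
    (polMat p q *ᵥ v) j = ∑ a, q j a * ∑ y, p j a y * v y := by
  simp only [Matrix.mulVec, dotProduct, polMat, Matrix.of_apply]
  calc (∑ y, (∑ a, q j a * p j a y) * v y)
      = ∑ y, ∑ a, q j a * (p j a y * v y) := by
        congr 1
        funext y
        rw [Finset.sum_mul]
        congr 1
        funext a
        ring
    _ = ∑ a, ∑ y, q j a * (p j a y * v y) := Finset.sum_comm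
    _ = ∑ a, q j a * ∑ y, p j a y * v y := by
        congr 1
        funext a
        rw [Finset.mul_sum]

/-- In a weakly communicating finite MDP, for every `γ ∈ [0,1)` and every
optimal policy `π^*_γ` for the `γ`-discounted MDP,
`sup_s |V_γ^{π^*_γ}(s) - ρ^*/(1-γ)| ≤ sp(h^*)`. -/
theorem stmt6 {S A : Type*} [Fintype S] [Fintype A] [DecidableEq S] [DecidableEq A]
    [Nonempty S] [Nonempty A]
    (p : S → A → S → ℝ) (hp : IsKernel p)
    (r : S → A → ℝ) (hr : ∀ s a, r s a ∈ Set.Icc (0 : ℝ) 1)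
    (hwc : WeaklyCommunicating p)
    (polB : S → A → ℝ) (hpolB : Blackwell p r polB)
    (γ : ℝ) (hγ : γ ∈ Set.Ico (0 : ℝ) 1)
    (polγ : S → A → ℝ) (hopt : DiscountedOptimal p r γ polγ) :
    ∀ s, |dval p r γ polγ s - gain p r polB s / (1 - γ)| ≤ span (bias p r polB) := by
  classical
  obtain ⟨hpolB_pol, γ₀, hγ₀, hbw⟩ := hpolB
  set P := polMat p polB with hPdef
  set rB := polRew r polB with hrBdef
  have hP : RowStoch P := polMat_rowStoch hp hpolB_pol
  obtain ⟨ρvec, u, hρfix, hdec, hconv⟩ := existsCesaroDecomp hP rB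
  obtain ⟨ku, wu, hkufix, hdecu, hconvu⟩ := existsCesaroDecomp hP u
  set h := ku - u with hhdef
  set l : Filter ℝ := 𝓝[<] (1:ℝ) with hldef
  -- gain is ρvec
  have hgain : gain p r polB = ρvec := by
    apply Filter.Tendsto.limUnder_eq
    exact hconv
  -- Poisson equation
  have hPoisson : ∀ j, rB j = ρvec j + (h j - (P *ᵥ h) j) := by
    intro j
    have h1 := congrFun hdec j
    have h2 : (P *ᵥ h) j = ku j - (P *ᵥ u) j := by
      rw [hhdef, Matrix.mulVec_sub, hkufix]
      simp
    simp only [hhdef, Pi.add_apply, Pi.sub_apply] at h1 ⊢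
    rw [h2]
    linarith
  have hrBfun : rB = ρvec + (h - P *ᵥ h) := by
    funext j
    simpa using hPoisson j
  -- bias is h
  have hbias : bias p r polB = h := by
    have hsum_inner : ∀ T : ℕ,
        (∑ t ∈ Finset.range T, ((P ^ t) *ᵥ rB - gain p r polB)) = (P ^ T) *ᵥ u - u := by
      intro T
      rw [hgain]
      have hterm : ∀ t : ℕ, (P ^ t) *ᵥ rB - ρvec = (P ^ t) *ᵥ (P *ᵥ u - u) := by
        intro t
        rw [hdec, Matrix.mulVec_add, pow_mulVec_fixed hρfix]
        abel
      calc (∑ t ∈ Finset.range T, ((P ^ t) *ᵥ rB - ρvec))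
          = ∑ t ∈ Finset.range T, (P ^ t) *ᵥ (P *ᵥ u - u) := by
            congr 1
            funext t
            exact hterm t
        _ = (P ^ T) *ᵥ u - u := telescope_mulVec P u T
    have hrw : bias p r polB = cesaro (fun T : ℕ => (P ^ T) *ᵥ u - u) := by
      rw [bias]
      exact congrArg cesaro (funext hsum_inner)
    rw [hrw]
    apply Filter.Tendsto.limUnder_eq
    have hev : (fun N : ℕ => (N:ℝ)⁻¹ • ∑ T ∈ Finset.range N, ((P ^ T) *ᵥ u - u))
        =ᶠ[atTop] (fun N : ℕ => ((N:ℝ)⁻¹ • ∑ T ∈ Finset.range N, (P ^ T) *ᵥ u) - u) := by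
      filter_upwards [eventually_ge_atTop 1] with N hN
      have hNne : ((N:ℝ)) ≠ 0 := by
        have : (0:ℝ) < N := by exact_mod_cast hN
        linarith
      rw [Finset.sum_sub_distrib, smul_sub, Finset.sum_const, Finset.card_range]
      congr 1
      rw [← Nat.cast_smul_eq_nsmul ℝ, smul_smul, inv_mul_cancel₀ hNne, one_smul]
    exact Tendsto.congr' hev.symm (hconvu.sub tendsto_const_nhds)
  -- sup/inf bounds on h
  set aI := ⨅ s, h s with haIdef
  set bS := ⨆ s, h s with hbSdef
  have hhab : ∀ j, aI ≤ h j ∧ h j ≤ bS := by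
    intro j
    constructor
    · exact ciInf_le (Set.Finite.bddBelow (Set.finite_range h)) j
    · exact le_ciSup (Set.Finite.bddAbove (Set.finite_range h)) j
  have hspan : span (bias p r polB) = bS - aI := by
    rw [hbias]
    rfl
  -- value identity
  have hVid : ∀ γ' : ℝ, 0 ≤ γ' → γ' < 1 → ∀ s : S, dval p r γ' polB s
      = ρvec s / (1 - γ') + (h s - (1-γ') * ∑' t:ℕ, γ'^t * ((P^t *ᵥ (P *ᵥ h)) s)) := by
    intro γ' h0 h1 s
    rw [dval_apply hp hpolB_pol h0 h1 r s]
    have hs1 := summable_geom_mulVec hP h0 h1 ρvec s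
    have hs2 := summable_geom_mulVec hP h0 h1 (h - P *ᵥ h) s
    have hterm : ∀ t : ℕ, γ'^t * (((P^t) *ᵥ rB) s)
        = γ'^t * (((P^t) *ᵥ ρvec) s) + γ'^t * (((P^t) *ᵥ (h - P *ᵥ h)) s) := by
      intro t
      rw [hrBfun, Matrix.mulVec_add]
      simp only [Pi.add_apply]
      ring
    calc ∑' t : ℕ, γ'^t * (((P^t) *ᵥ rB) s)
        = ∑' t : ℕ, (γ'^t * (((P^t) *ᵥ ρvec) s) + γ'^t * (((P^t) *ᵥ (h - P *ᵥ h)) s)) := by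
          congr 1
          funext t
          exact hterm t
      _ = (∑' t : ℕ, γ'^t * (((P^t) *ᵥ ρvec) s))
          + ∑' t : ℕ, γ'^t * (((P^t) *ᵥ (h - P *ᵥ h)) s) := Summable.tsum_add hs1 hs2
      _ = ρvec s / (1 - γ') + (h s - (1-γ') * ∑' t:ℕ, γ'^t * ((P^t *ᵥ (P *ᵥ h)) s)) := by
          congr 1
          · simp only [pow_mulVec_fixed hρfix]
            exact tsum_geom_const h0 h1 _
          · rw [tsum_geom_sub_mulVec hP h0 h1 h s]
            have h9 : ∑' t : ℕ, γ'^t * (((P^(t+1)) *ᵥ h) s)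
                = ∑' t : ℕ, γ'^t * ((P^t *ᵥ (P *ᵥ h)) s) := by
              congr 1
              funext t
              rw [pow_succ, ← Matrix.mulVec_mulVec]
            rw [h9]
  -- Toeplitz limit of the correction term
  have hwlim : ∀ s, Tendsto (fun γ' : ℝ => (1-γ') * ∑' t:ℕ, γ'^t * ((P^t *ᵥ (P *ᵥ h)) s))
      l (𝓝 0) := by
    intro s
    have hdecPh : P *ᵥ h = (0 : S → ℝ) + (P *ᵥ (-(P *ᵥ wu)) - (-(P *ᵥ wu))) := by
      have h1 : P *ᵥ h = ku - P *ᵥ u := by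
        rw [hhdef, Matrix.mulVec_sub, hkufix]
      have h2 : P *ᵥ u = ku + ((P *ᵥ (P *ᵥ wu)) - P *ᵥ wu) := by
        conv_lhs => rw [hdecu]
        rw [Matrix.mulVec_add, Matrix.mulVec_sub, hkufix]
      rw [h1, h2, Matrix.mulVec_neg]
      abel
    have hces := cesaro_tendsto_of_decomp hP (k := (0 : S → ℝ)) (w := -(P *ᵥ wu))
      (v := P *ᵥ h) (by rw [Matrix.mulVec_zero]) hdecPh
    obtain ⟨C, hC0, hC⟩ := exists_abs_bound (P *ᵥ h)
    apply toeplitz_abel (C := C) (fun t => (hP.pow t).abs_mulVec_le hC s)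
    have h3 := tendsto_pi_nhds.1 hces s
    simp only [Pi.zero_apply] at h3
    apply h3.congr
    intro N
    simp [Finset.sum_apply]
  -- the normalized value converges to the bias
  have hwten : ∀ s, Tendsto (fun γ' : ℝ => dval p r γ' polB s - ρvec s/(1-γ')) l (𝓝 (h s)) := by
    intro s
    have hev : ∀ᶠ γ' in l, (h s - (1-γ') * ∑' t:ℕ, γ'^t * ((P^t *ᵥ (P *ᵥ h)) s))
        = dval p r γ' polB s - ρvec s/(1-γ') := by
      apply Filter.eventually_of_mem (Ioo_mem_nhdsLT (by norm_num : (0:ℝ) < 1))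
      intro γ' hγ'
      rw [hVid γ' (le_of_lt hγ'.1) hγ'.2 s]
      ring
    have hbase : Tendsto (fun γ' : ℝ => h s - (1-γ') * ∑' t:ℕ, γ'^t * ((P^t *ᵥ (P *ᵥ h)) s))
        l (𝓝 (h s)) := by
      have := (tendsto_const_nhds (x := h s) (f := l)).sub (hwlim s)
      simpa using this
    exact Tendsto.congr' hev hbase
  -- Bellman inequality for large discount factors
  have hbell : ∀ γ' : ℝ, γ₀ ≤ γ' → γ' < 1 → ∀ s a,
      r s a + γ' * ∑ s', p s a s' * dval p r γ' polB s' ≤ dval p r γ' polB s := by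
    intro γ' hγ'0 hγ'1 s a
    have h0' : 0 ≤ γ' := le_trans (le_of_lt hγ₀.1) hγ'0
    obtain ⟨V, ⟨d, hd⟩, hdom, hineq⟩ := exists_opt_value hp hr h0' hγ'1
    have hVeq : dval p r γ' polB = V := by
      funext j
      refine le_antisymm (hdom polB hpolB_pol j) ?_
      rw [← hd]
      exact hbw γ' ⟨hγ'0, hγ'1⟩ (detPol d) (isPolicy_detPol d) j
    rw [hVeq]
    exact hineq s a
  -- gain limit
  have hρten : ∀ y, Tendsto (fun γ' : ℝ => (1-γ') * dval p r γ' polB y) l (𝓝 (ρvec y)) := by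
    intro y
    have h1γ : Tendsto (fun γ' : ℝ => 1 - γ') l (𝓝 0) := by
      have : Tendsto (fun γ' : ℝ => γ') l (𝓝 1) := tendsto_id.mono_left nhdsWithin_le_nhds
      have h2 := (tendsto_const_nhds (x := (1:ℝ)) (f := l)).sub this
      simpa using h2
    have hbase : Tendsto (fun γ' : ℝ =>
        ρvec y + (1-γ') * (dval p r γ' polB y - ρvec y/(1-γ'))) l (𝓝 (ρvec y)) := by
      have h3 := (h1γ.mul (hwten y)).const_add (ρvec y)
      simpa using h3
    apply Tendsto.congr' _ hbase
    apply Filter.eventually_of_mem (Ioo_mem_nhdsLT (by norm_num : (0:ℝ) < 1))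
    intro γ' hγ'
    have hne : (1:ℝ) - γ' ≠ 0 := by
      have := hγ'.2
      intro hc
      rw [sub_eq_zero] at hc
      exact absurd hc.symm (ne_of_lt this)
    field_simp
    ring
  -- superharmonicity of the gain for every action
  have hγid : Tendsto (fun γ' : ℝ => γ') l (𝓝 1) := tendsto_id.mono_left nhdsWithin_le_nhds
  have h1γ0 : Tendsto (fun γ' : ℝ => 1 - γ') l (𝓝 0) := by
    have h2 := (tendsto_const_nhds (x := (1:ℝ)) (f := l)).sub hγid
    simpa using h2
  have hsuper : ∀ x a, ∑ y, p x a y * ρvec y ≤ ρvec x := by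
    intro x a
    have hev : ∀ᶠ γ' in l,
        (1-γ') * r x a + γ' * ∑ y, p x a y * ((1-γ') * dval p r γ' polB y)
          ≤ (1-γ') * dval p r γ' polB x := by
      apply Filter.eventually_of_mem (Ioo_mem_nhdsLT hγ₀.2)
      intro γ' hγ'
      have hb := hbell γ' (le_of_lt hγ'.1) hγ'.2 x a
      have h1γ : (0:ℝ) ≤ 1 - γ' := by linarith [hγ'.2]
      have h2 : ∑ y, p x a y * ((1-γ') * dval p r γ' polB y)
          = (1-γ') * ∑ y, p x a y * dval p r γ' polB y := by
        rw [Finset.mul_sum]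
        congr 1
        funext y
        ring
      have h3 := mul_le_mul_of_nonneg_left hb h1γ
      calc (1-γ') * r x a + γ' * ∑ y, p x a y * ((1-γ') * dval p r γ' polB y)
          = (1-γ') * (r x a + γ' * ∑ y, p x a y * dval p r γ' polB y) := by
            rw [h2]
            ring
        _ ≤ (1-γ') * dval p r γ' polB x := h3
    have hLHS : Tendsto (fun γ' : ℝ =>
        (1-γ') * r x a + γ' * ∑ y, p x a y * ((1-γ') * dval p r γ' polB y)) l
        (𝓝 (∑ y, p x a y * ρvec y)) := by
      have hsum : Tendsto (fun γ' : ℝ => ∑ y, p x a y * ((1-γ') * dval p r γ' polB y)) l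
          (𝓝 (∑ y, p x a y * ρvec y)) :=
        tendsto_finset_sum _ (fun y _ => (hρten y).const_mul (p x a y))
      have h4 := (h1γ0.mul_const (r x a)).add (hγid.mul hsum)
      simpa using h4
    exact le_of_tendsto_of_tendsto hLHS (hρten x) hev
  -- constancy of the gain
  have hρconst : ∀ s s' : S, ρvec s = ρvec s' := by
    obtain ⟨S1, hS1a, hS1b⟩ := hwc
    obtain ⟨smin, -, hsmin⟩ := Finset.exists_min_image Finset.univ ρvec
      ⟨Classical.arbitrary S, Finset.mem_univ _⟩
    obtain ⟨smax, -, hsmax⟩ := Finset.exists_max_image Finset.univ ρvec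
      ⟨Classical.arbitrary S, Finset.mem_univ _⟩
    have hminle : ∀ j, ρvec smin ≤ ρvec j := fun j => hsmin j (Finset.mem_univ j)
    have hmaxle : ∀ j, ρvec j ≤ ρvec smax := fun j => hsmax j (Finset.mem_univ j)
    have hmstep : ∀ x ∈ {x | ρvec x = ρvec smin}, ∀ (a : A), ∀ y, 0 < p x a y →
        y ∈ {x | ρvec x = ρvec smin} := by
      intro x hx a y hpos
      have h1 := hsuper x a
      have hx' : ρvec x = ρvec smin := hx
      have h2 : ∑ y', p x a y' * (ρvec y' - ρvec smin)
          = (∑ y', p x a y' * ρvec y') - ρvec smin := by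
        calc ∑ y', p x a y' * (ρvec y' - ρvec smin)
            = (∑ y', p x a y' * ρvec y') - ∑ y', p x a y' * ρvec smin := by
              rw [← Finset.sum_sub_distrib]
              congr 1
              funext y'
              ring
          _ = (∑ y', p x a y' * ρvec y') - ρvec smin := by
              rw [← Finset.sum_mul, (hp x a).2, one_mul]
      have h4 : ∀ y' ∈ Finset.univ, 0 ≤ p x a y' * (ρvec y' - ρvec smin) :=
        fun y' _ => mul_nonneg ((hp x a).1 y') (by linarith [hminle y'])
      have h5 : ∑ y', p x a y' * (ρvec y' - ρvec smin) = 0 := by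
        have h3 : ∑ y', p x a y' * (ρvec y' - ρvec smin) ≤ 0 := by
          rw [h2]
          linarith
        exact le_antisymm h3 (Finset.sum_nonneg h4)
      have h6 := (Finset.sum_eq_zero_iff_of_nonneg h4).1 h5 y (Finset.mem_univ y)
      have h7 : ρvec y - ρvec smin = 0 := by
        rcases mul_eq_zero.1 h6 with hc | hc
        · exact absurd hc (ne_of_gt hpos)
        · exact hc
      show ρvec y = ρvec smin
      linarith
    have hmreach : ∀ q : S → A → ℝ, IsPolicy q → ∀ x ∈ {x | ρvec x = ρvec smin}, ∀ y,
        Reaches (polMat p q) x y → y ∈ {x | ρvec x = ρvec smin} := by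
      intro q hq
      apply closed_reaches (polMat_rowStoch hp hq)
      intro x hx y hstep
      obtain ⟨a, ha⟩ := step_pos_action hp hq hstep
      exact hmstep x hx a y ha
    obtain ⟨y0, hy0m, hy0rec⟩ := exists_recurrent_closed
      (C := {x | ρvec x = ρvec smin})
      (polMat_rowStoch hp (isPolicy_unifPol)) ⟨smin, show ρvec smin = ρvec smin from rfl⟩
      (hmreach unifPol isPolicy_unifPol)
    have hy0S1 : y0 ∉ S1 := fun hmem => hS1a y0 hmem unifPol isPolicy_unifPol hy0rec
    have hgstep : ∀ x ∈ {x | ρvec x = ρvec smax}, ∀ z, 0 < P x z →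
        z ∈ {x | ρvec x = ρvec smax} := by
      intro x hx z hpos
      have hx' : ρvec x = ρvec smax := hx
      have hharm : ρvec x = ∑ z', P x z' * ρvec z' := by
        have h8 := congrFun hρfix x
        rw [← h8]
        simp [Matrix.mulVec, dotProduct]
      have h2 : ∑ z', P x z' * (ρvec smax - ρvec z')
          = ρvec smax - ∑ z', P x z' * ρvec z' := by
        calc ∑ z', P x z' * (ρvec smax - ρvec z')
            = (∑ z', P x z' * ρvec smax) - ∑ z', P x z' * ρvec z' := by
              rw [← Finset.sum_sub_distrib]
              congr 1
              funext z'
              ring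
          _ = ρvec smax - ∑ z', P x z' * ρvec z' := by
              rw [← Finset.sum_mul, hP.2 x, one_mul]
      have h4 : ∀ z' ∈ Finset.univ, 0 ≤ P x z' * (ρvec smax - ρvec z') :=
        fun z' _ => mul_nonneg (hP.1 x z') (by linarith [hmaxle z'])
      have h5 : ∑ z', P x z' * (ρvec smax - ρvec z') = 0 := by
        have h3 : ∑ z', P x z' * (ρvec smax - ρvec z') ≤ 0 := by
          rw [h2, ← hharm, hx']
          linarith
        exact le_antisymm h3 (Finset.sum_nonneg h4)
      have h6 := (Finset.sum_eq_zero_iff_of_nonneg h4).1 h5 z (Finset.mem_univ z)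
      have h7 : ρvec smax - ρvec z = 0 := by
        rcases mul_eq_zero.1 h6 with hc | hc
        · exact absurd hc (ne_of_gt hpos)
        · exact hc
      show ρvec z = ρvec smax
      linarith
    obtain ⟨z0, hz0g, hz0rec⟩ := exists_recurrent_closed
      (C := {x | ρvec x = ρvec smax})
      hP ⟨smax, show ρvec smax = ρvec smax from rfl⟩
      (closed_reaches hP hgstep)
    have hz0S1 : z0 ∉ S1 := fun hmem => hS1a z0 hmem polB hpolB_pol hz0rec
    obtain ⟨q, hq, hreach⟩ := hS1b y0 hy0S1 z0 hz0S1
    have hz0m : z0 ∈ {x | ρvec x = ρvec smin} := hmreach q hq y0 hy0m z0 hreach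
    have hmm : ρvec smax = ρvec smin := by
      have h1 : ρvec z0 = ρvec smin := hz0m
      have h2 : ρvec z0 = ρvec smax := hz0g
      linarith
    intro s s'
    have := hminle s
    have := hmaxle s
    have := hminle s'
    have := hmaxle s'
    linarith
  -- optimality inequality for the bias
  have hopti : ∀ s a, r s a + ∑ y, p s a y * h y ≤ ρvec s + h s := by
    intro s a
    have hev : ∀ᶠ γ' in l,
        r s a + γ' * ∑ y, p s a y * (dval p r γ' polB y - ρvec y/(1-γ'))
          ≤ ρvec s + (dval p r γ' polB s - ρvec s/(1-γ')) := by
      apply Filter.eventually_of_mem (Ioo_mem_nhdsLT hγ₀.2)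
      intro γ' hγ'
      have hb := hbell γ' (le_of_lt hγ'.1) hγ'.2 s a
      have hpos : (0:ℝ) < 1 - γ' := by linarith [hγ'.2]
      have hne : (1:ℝ) - γ' ≠ 0 := ne_of_gt hpos
      have h1 : ∑ y, p s a y * dval p r γ' polB y
          = (∑ y, p s a y * (dval p r γ' polB y - ρvec y/(1-γ'))) + ρvec s/(1-γ') := by
        have h2 : ∀ y, p s a y * dval p r γ' polB y
            = p s a y * (dval p r γ' polB y - ρvec y/(1-γ'))
              + p s a y * (ρvec s/(1-γ')) := by
          intro y
          have h3 : ρvec y = ρvec s := hρconst y s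
          rw [h3]
          ring
        calc ∑ y, p s a y * dval p r γ' polB y
            = ∑ y, (p s a y * (dval p r γ' polB y - ρvec y/(1-γ'))
                + p s a y * (ρvec s/(1-γ'))) := by
              congr 1
              funext y
              exact h2 y
          _ = (∑ y, p s a y * (dval p r γ' polB y - ρvec y/(1-γ')))
              + ∑ y, p s a y * (ρvec s/(1-γ')) := Finset.sum_add_distrib
          _ = (∑ y, p s a y * (dval p r γ' polB y - ρvec y/(1-γ'))) + ρvec s/(1-γ') := by
              rw [← Finset.sum_mul, (hp s a).2, one_mul]
      have hγX : γ' * (ρvec s/(1-γ')) = ρvec s/(1-γ') - ρvec s := by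
        field_simp
        ring
      rw [h1, mul_add, hγX] at hb
      linarith
    have hLHS : Tendsto (fun γ' : ℝ =>
        r s a + γ' * ∑ y, p s a y * (dval p r γ' polB y - ρvec y/(1-γ'))) l
        (𝓝 (r s a + ∑ y, p s a y * h y)) := by
      have hsum : Tendsto (fun γ' : ℝ =>
          ∑ y, p s a y * (dval p r γ' polB y - ρvec y/(1-γ'))) l
          (𝓝 (∑ y, p s a y * h y)) :=
        tendsto_finset_sum _ (fun y _ => (hwten y).const_mul (p s a y))
      have h4 := (tendsto_const_nhds (x := r s a) (f := l)).add (hγid.mul hsum)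
      simpa using h4
    have hRHS : Tendsto (fun γ' : ℝ =>
        ρvec s + (dval p r γ' polB s - ρvec s/(1-γ'))) l (𝓝 (ρvec s + h s)) :=
      (tendsto_const_nhds (x := ρvec s) (f := l)).add (hwten s)
    exact le_of_tendsto_of_tendsto hLHS hRHS hev
  -- final assembly
  intro s
  set ρc := ρvec s with hρcdef
  have hρall : ∀ j, ρvec j = ρc := fun j => hρconst j s
  have hγ0 : (0:ℝ) ≤ γ := hγ.1
  have hγ1 : γ < 1 := hγ.2
  have hQ : RowStoch (polMat p polγ) := polMat_rowStoch hp hopt.1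
  -- upper bound
  have hupper : dval p r γ polγ s ≤ ρc/(1-γ) + (bS - aI) := by
    have hle : ∀ j, polRew r polγ j ≤ ρc + (h j - (polMat p polγ *ᵥ h) j) := by
      intro j
      rw [polMat_mulVec_swap, polRew]
      have h1 : (∑ a, polγ j a * r j a) + ∑ a, polγ j a * ∑ y, p j a y * h y
          = ∑ a, polγ j a * (r j a + ∑ y, p j a y * h y) := by
        rw [← Finset.sum_add_distrib]
        congr 1
        funext a
        ring
      have h2 : (∑ a, polγ j a * (r j a + ∑ y, p j a y * h y)) ≤ ∑ a, polγ j a * (ρc + h j) := by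
        apply Finset.sum_le_sum
        intro a _
        apply mul_le_mul_of_nonneg_left _ ((hopt.1 j).1 a)
        have := hopti j a
        rw [hρall j] at this
        exact this
      have h3 : (∑ a, polγ j a * (ρc + h j)) = ρc + h j := by
        rw [← Finset.sum_mul, (hopt.1 j).2, one_mul]
      linarith
    have h4 := tsum_upper_master hQ hγ0 hγ1 hhab hle s
    rw [dval_apply hp hopt.1 hγ0 hγ1 r s]
    have h5 : h s - aI ≤ bS - aI := by
      have := (hhab s).2
      linarith
    linarith
  -- lower bound
  have hlower : ρc/(1-γ) - (bS - aI) ≤ dval p r γ polγ s := by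
    have hge : ∀ j, ρc + (h j - (P *ᵥ h) j) ≤ rB j := by
      intro j
      rw [hPoisson j, hρall j]
    have h4 := tsum_lower_master hP hγ0 hγ1 hhab hge s
    have h6 : dval p r γ polB s ≤ dval p r γ polγ s := hopt.2 polB hpolB_pol s
    rw [dval_apply hp hpolB_pol hγ0 hγ1 r s] at h6
    have h5 : aI - bS ≤ h s - bS := by
      have := (hhab s).1
      linarith
    have : ρc/(1-γ) + (aI - bS) ≤ ∑' t:ℕ, γ^t * ((P^t *ᵥ rB) s) := by linarith
    calc ρc/(1-γ) - (bS - aI) = ρc/(1-γ) + (aI - bS) := by ring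
      _ ≤ ∑' t:ℕ, γ^t * ((P^t *ᵥ rB) s) := this
      _ ≤ dval p r γ polγ s := h6
  rw [hspan, hgain]
  rw [abs_le]
  constructor
  · linarith
  · linarith



end PaperMDP
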